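/- arXiv:0712.2104 — 9 statements merged into one kernel-verified Lean document; each statement's English description precedes it below -/
import Mathlib

section
/- Let H be a finitely generated abelian group of rank r (the minimal number of cyclic summands), and let τ be the smallest elementary divisor of the torsion subgroup T of H (with τ = 0 if T = 0). Then the r-th exterior power Λ^r H is cyclic of order τ if T ≠ 0, and is infinite cyclic if T = 0. Moreover, if x_1, …, x_r generate H, then x_1 ∧ ⋯ ∧ x_r generates Λ^r H. -/
/-!
Write `H ≅ Π k, ZMod (c k)` with `c = (0, …, 0, τ₁, …, τₜ)` and let `θ` be the wedge of the
standard generators. Any wedge of elements of a generating family is `±` or `0` times the wedge of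
the family itself, so `θ` (or the wedge of any generating family) spans `⋀ʳ H`. Since `c k` kills
the `k`-th generator, it kills `θ`. Conversely, if `d` divides every `c k`, then reduction modulo
`d` followed by the determinant is a linear form `⋀ʳ H → ZMod d` sending `θ` to `1`, so `d` divides
the order of `θ`. Thus the order of `θ` is `gcd (c k) = τ₁`, or `0` when `t = 0`.
-/

open ExteriorAlgebra Submodule Set

def AlternatingMap.restrictScalars (R : Type*) {A M N ι : Type*} [Semiring R] [Semiring A]
    [SMul R A] [AddCommMonoid M] [AddCommMonoid N] [Module A M] [Module A N] [Module R M]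
    [Module R N] [IsScalarTower R A M] [IsScalarTower R A N] (f : M [⋀^ι]→ₗ[A] N) :
    M [⋀^ι]→ₗ[R] N :=
  { f.toMultilinearMap.restrictScalars R with map_eq_zero_of_eq' := f.map_eq_zero_of_eq' }

theorem AlternatingMap.smul_apply_eq_zero {R M N ι : Type*} [Semiring R] [AddCommMonoid M]
    [AddCommMonoid N] [Module R M] [Module R N] [DecidableEq ι] (f : M [⋀^ι]→ₗ[R] N)
    {v : ι → M} {c : R} (i : ι) (h : c • v i = 0) : c • f v = 0 := by
  rw [← Function.update_eq_self i v, ← f.map_update_smul, h, f.map_update_zero]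

section

variable {R M : Type*} [CommRing R] [AddCommGroup M] [Module R M]

theorem ExteriorAlgebra.span_ιMulti_eq_of_span_eq_top {n : ℕ} {x : Fin n → M}
    (hx : span R (range x) = ⊤) : span R {ιMulti R n x} = ⋀[R]^n M := by
  refine le_antisymm (span_le.2 (singleton_subset_iff.2 (ιMulti_range R n ⟨x, rfl⟩))) ?_
  rw [← exteriorPower.ιMulti_span_fixedDegree_of_span_eq_top R n M hx, span_le]
  rintro - ⟨a, ha, rfl⟩
  obtain ⟨α, rfl⟩ := range_subset_range_iff_exists_comp.mp ha
  by_cases hα : Function.Injective α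
  · rw [show x ∘ α = x ∘ Equiv.ofBijective α hα.bijective_of_finite from rfl,
      AlternatingMap.map_perm]
    exact Submodule.smul_of_tower_mem _ _ (mem_span_singleton_self _)
  · rw [AlternatingMap.map_eq_zero_of_not_injective _ _ fun h => hα h.of_comp]
    exact zero_mem _

theorem ExteriorAlgebra.addOrderOf_one_dvd_addOrderOf_ιMulti {S : Type*} [CommRing S]
    [Algebra R S] {n : ℕ} (φ : M →ₗ[R] (Fin n → S)) {x : Fin n → M}
    (hφ : ∀ k, φ (x k) = Pi.single k 1) : addOrderOf (1 : S) ∣ addOrderOf (ιMulti R n x) := by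
  classical
  let det : M [⋀^Fin n]→ₗ[R] S :=
    (Matrix.detRowAlternating.restrictScalars R).compLinearMap φ
  have hdet : liftAlternating (Pi.single n det) (ιMulti R n x) = 1 := by
    rw [liftAlternating_apply_ιMulti, Pi.single_eq_same]
    change Matrix.det (fun k => φ (x k)) = 1
    rw [show (fun k => φ (x k)) = (1 : Matrix (Fin n) (Fin n) S) by
      ext k l; rw [hφ, Matrix.one_eq_pi_single], Matrix.det_one]
  simpa [hdet] using addOrderOf_map_dvd (liftAlternating (Pi.single n det)).toAddMonoidHom
    (ιMulti R n x)

end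

section

variable {n : ℕ} {c : Fin n → ℕ}

theorem span_range_single_one_zmod :
    span ℤ (range fun k => (Pi.single k 1 : Π k, ZMod (c k))) = ⊤ := by
  refine eq_top_iff'.2 fun v => (mem_span_range_iff_exists_fun ℤ).2 ⟨fun k => (v k).cast, ?_⟩
  conv_rhs => rw [← Finset.univ_sum_single v]
  refine Finset.sum_congr rfl fun k _ => ?_
  rw [← Pi.single_smul, zsmul_one, ZMod.intCast_zmod_cast]

variable {H : Type*} [AddCommGroup H] (E : H ≃ₗ[ℤ] Π k, ZMod (c k))

theorem span_range_symm_single_one : span ℤ (range fun k => E.symm (Pi.single k 1)) = ⊤ := by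
  rw [range_comp' E.symm, ← LinearEquiv.coe_coe, span_image, span_range_single_one_zmod, Submodule.map_top, LinearEquiv.range]

theorem dvd_addOrderOf_ιMulti_symm_single_one_iff (d : ℕ) :
    d ∣ addOrderOf (ιMulti ℤ n fun k => E.symm (Pi.single k 1)) ↔ ∀ k, d ∣ c k := by
  classical
  constructor
  · intro hd k
    refine hd.trans (addOrderOf_dvd_of_nsmul_eq_zero ?_)
    rw [← natCast_zsmul]
    refine (ιMulti ℤ n).smul_apply_eq_zero k ?_
    rw [← map_zsmul, natCast_zsmul, ← Pi.single_smul, nsmul_one, ZMod.natCast_self,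
      Pi.single_zero, map_zero]
  · intro hd
    let reduce : (Π k, ZMod (c k)) →ₗ[ℤ] (Fin n → ZMod d) :=
      LinearMap.pi fun k => (ZMod.castHom (hd k) (ZMod d)).toIntAlgHom.toLinearMap ∘ₗ
        LinearMap.proj k
    have := addOrderOf_one_dvd_addOrderOf_ιMulti (reduce ∘ₗ E.toLinearMap)
      (x := fun k => E.symm (Pi.single k 1)) fun k => by
        ext j
        simpa [reduce, ZMod.cast_one (hd k)] using
          Pi.apply_single (fun k => ZMod.castHom (hd k) (ZMod d)) (fun _ => map_zero _) k 1 j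
    rwa [ZMod.addOrderOf_one] at this

end

theorem stmt_0_general (f t : ℕ) (τ : Fin t → ℕ)
    (hdvd : ∀ i j : Fin t, i ≤ j → τ i ∣ τ j)
    (H : Type) [AddCommGroup H]
    (e : H ≃+ ((Fin f → ℤ) × ((i : Fin t) → ZMod (τ i)))) :
    ∃ θ : ExteriorAlgebra ℤ H,
      θ ∈ ⋀[ℤ]^(f + t) H ∧
      Submodule.span ℤ {θ} = ⋀[ℤ]^(f + t) H ∧
      addOrderOf θ = (if h : t = 0 then 0 else τ ⟨0, Nat.pos_of_ne_zero h⟩) ∧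
      ∀ x : Fin (f + t) → H, Submodule.span ℤ (Set.range x) = ⊤ →
        Submodule.span ℤ {(ExteriorAlgebra.ιMulti ℤ (f + t) x : ExteriorAlgebra ℤ H)} =
          ⋀[ℤ]^(f + t) H := by
  -- `ℤ` is `ZMod 0`, so `H` is a product of `f + t` cyclic groups.
  let c : Fin (f + t) → ℕ := fun k => Sum.elim (fun _ => 0) τ (finSumFinEquiv.symm k)
  let E : H ≃ₗ[ℤ] Π k, ZMod (c k) := e.toIntLinearEquiv ≪≫ₗ
    (LinearEquiv.sumPiEquivProdPi ℤ _ _ fun s => ZMod (Sum.elim (fun _ => 0) τ s)).symm ≪≫ₗ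
    (LinearEquiv.piCongrLeft ℤ (fun s => ZMod (Sum.elim (fun _ => 0) τ s)) finSumFinEquiv.symm).symm
  have hc : ∀ s, c (finSumFinEquiv s) = Sum.elim (fun _ => 0) τ s := fun s =>
    congrArg _ (finSumFinEquiv.symm_apply_apply s)
  have hdvd_c : ∀ k, (if h : t = 0 then 0 else τ ⟨0, Nat.pos_of_ne_zero h⟩) ∣ c k := by
    intro k
    obtain ⟨i | j, rfl⟩ := finSumFinEquiv.surjective k
    · rw [hc]
      exact dvd_zero _
    · rw [hc, Sum.elim_inr, dif_neg (Fin.pos j).ne']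
      exact hdvd _ j (Nat.zero_le _)
  refine ⟨_, ιMulti_range ℤ _ ⟨_, rfl⟩, span_ιMulti_eq_of_span_eq_top (span_range_symm_single_one E),
    Nat.dvd_antisymm ?_ ((dvd_addOrderOf_ιMulti_symm_single_one_iff E _).2 hdvd_c),
    fun x hx => span_ιMulti_eq_of_span_eq_top hx⟩
  split_ifs with ht
  · exact dvd_zero _
  · have := (dvd_addOrderOf_ιMulti_symm_single_one_iff E _).1 dvd_rfl
      (finSumFinEquiv (.inr ⟨0, Nat.pos_of_ne_zero ht⟩))
    rwa [hc, Sum.elim_inr] at this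

/-- Let `H` be a finitely generated abelian group, presented explicitly as
`(Fin f → ℤ) × Π i, ZMod (τ i)` with elementary divisors `1 < τ 0 ∣ τ 1 ∣ ⋯ ∣ τ (t-1)`,
so that the rank of `H` (minimal number of cyclic summands) is `r = f + t` and the smallest
elementary divisor of the torsion subgroup is `τ 0` (or `0` if `t = 0`).  Then the `r`-th
exterior power `⋀[ℤ]^r H` is cyclic generated by an element `θ` whose additive order is `τ 0`
(order `0`, i.e. infinite cyclic, when the torsion subgroup is trivial), and for any
generating family `x : Fin r → H`, the wedge `x 1 ∧ ⋯ ∧ x r` generates `⋀[ℤ]^r H`. -/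
theorem stmt_0 (f t : ℕ) (τ : Fin t → ℕ) (hτ : ∀ i, 1 < τ i)
    (hdvd : ∀ i j : Fin t, i ≤ j → τ i ∣ τ j)
    (H : Type) [AddCommGroup H]
    (e : H ≃+ ((Fin f → ℤ) × ((i : Fin t) → ZMod (τ i)))) :
    ∃ θ : ExteriorAlgebra ℤ H,
      θ ∈ ⋀[ℤ]^(f + t) H ∧
      Submodule.span ℤ {θ} = ⋀[ℤ]^(f + t) H ∧
      addOrderOf θ = (if h : t = 0 then 0 else τ ⟨0, Nat.pos_of_ne_zero h⟩) ∧
      ∀ x : Fin (f + t) → H, Submodule.span ℤ (Set.range x) = ⊤ →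
        Submodule.span ℤ {(ExteriorAlgebra.ιMulti ℤ (f + t) x : ExteriorAlgebra ℤ H)} =
          ⋀[ℤ]^(f + t) H :=
  stmt_0_general f t τ hdvd H e
end

section
/- Let H and H' be finitely generated abelian groups of the same rank r, and let f : H → H' be a surjective homomorphism. If θ generates Λ^r H, then Λ^r f(θ) generates Λ^r H'. In particular, the smallest elementary divisor of H' divides the smallest elementary divisor of H. -/
/-- Let `H` and `H'` be finitely generated abelian groups of the same rank `r`
(rank = minimal number of cyclic summands = minimal cardinality of a generating set), and let
`f : H → H'` be a surjective homomorphism.  If `θ` generates the `r`-th exterior power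
`⋀[ℤ]^r H`, then its image under the induced map generates `⋀[ℤ]^r H'`.  In particular the
smallest elementary divisor of `H'` divides that of `H`: since these exterior powers are cyclic
of order the respective smallest elementary divisors, this is expressed by the divisibility of
the additive orders of the generators. -/
theorem stmt_1 (r : ℕ) (H H' : Type) [AddCommGroup H] [AddCommGroup H']
    (hrH : (∃ s : Finset H, s.card = r ∧ Submodule.span ℤ (s : Set H) = ⊤) ∧
      ∀ s : Finset H, Submodule.span ℤ (s : Set H) = ⊤ → r ≤ s.card)
    (hrH' : (∃ s : Finset H', s.card = r ∧ Submodule.span ℤ (s : Set H') = ⊤) ∧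
      ∀ s : Finset H', Submodule.span ℤ (s : Set H') = ⊤ → r ≤ s.card)
    (f : H →+ H') (hf : Function.Surjective f)
    (θ : ExteriorAlgebra ℤ H) (hθ : θ ∈ ⋀[ℤ]^r H)
    (hgen : Submodule.span ℤ {θ} = ⋀[ℤ]^r H) :
    Submodule.span ℤ {ExteriorAlgebra.map f.toIntLinearMap θ} = ⋀[ℤ]^r H' ∧
    addOrderOf (ExteriorAlgebra.map f.toIntLinearMap θ) ∣ addOrderOf θ := by
  have key : Submodule.map (ExteriorAlgebra.map f.toIntLinearMap).toLinearMap (⋀[ℤ]^r H)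
      = ⋀[ℤ]^r H' := by
    have h1 : LinearMap.range f.toIntLinearMap = ⊤ := LinearMap.range_eq_top.mpr hf
    rw [Submodule.map_pow, ExteriorAlgebra.ι_range_map_map, h1, Submodule.map_top]
  refine ⟨?_, addOrderOf_map_dvd (ExteriorAlgebra.map f.toIntLinearMap).toLinearMap.toAddMonoidHom θ⟩
  rw [← key, ← hgen, Submodule.map_span]
  simp
end

section
/- Let T be a finite abelian p-group for a prime p, let π : F → T be a surjection from a finitely generated free abelian group F, and let h : T → T be an automorphism. Then there exists an endomorphism f : F → F with π ∘ f = h ∘ π and such that p does not divide det f. -/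
/-!
Reduce modulo `p`. Over `𝔽_p` the surjection `F/pF → T/pT` splits, so the automorphism of `T/pT`
induced by `h` lifts to an automorphism `g` of `F/pF`. The images of a basis of `F` can then be
chosen to lift `h` through `π` and `g` through reduction at once, since an element of `T` and an
element of `F/pF` with the same image in `T/pT` have a common preimage in `F`. The resulting `f`
reduces to `g`, so `det f ≡ det g ≢ 0 (mod p)`.
-/

open Function

theorem LinearMap.exists_linearEquiv_comp_eq_of_surjective {R V W : Type*} [Ring R]
    [AddCommGroup V] [Module R V] [AddCommGroup W] [Module R W] [Module.Projective R W]
    (φ : V →ₗ[R] W) (hφ : Surjective φ)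
    (g : W ≃ₗ[R] W) : ∃ G : V ≃ₗ[R] V, ∀ v, φ (G v) = g (φ v) := by
  obtain ⟨s, hs⟩ := φ.exists_rightInverse_of_surjective (range_eq_top_of_surjective φ hφ)
  have hφs (w : W) : φ (s w) = w := LinearMap.congr_fun hs w
  let lift (e : W ≃ₗ[R] W) : V →ₗ[R] V :=
    LinearMap.id + s ∘ₗ (e.toLinearMap - LinearMap.id) ∘ₗ φ
  have hlift (e : W ≃ₗ[R] W) (v : V) : φ (lift e v) = e (φ v) := by simp [lift, hφs]
  refine ⟨.ofLinearMap (lift g) (lift g.symm) ?_ ?_, hlift g⟩ <;>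
  · ext v
    simp [lift, hφs]
    abel

namespace ModN

variable {G H : Type*} [AddCommGroup G] [AddCommGroup H] {n : ℕ}

lemma mkQ_surjective : Surjective (mkQ n : G →+ ModN G n) := Submodule.mkQ_surjective _

lemma mkQ_eq_zero_iff {x : G} : mkQ n x = 0 ↔ ∃ y, n • y = x := by
  simp [mkQ, Submodule.Quotient.mk_eq_zero]

def map (f : G →+ H) : ModN G n →ₗ[ZMod n] ModN H n :=
  AddMonoidHom.toZModLinearMap n <| LinearMap.toAddMonoidHom <|
    Submodule.mapQ _ _ f.toIntLinearMap <| by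
      rintro _ ⟨x, rfl⟩
      exact ⟨f x, by simp⟩

lemma map_mkQ (f : G →+ H) (x : G) : map f (mkQ n x) = mkQ n (f x) := rfl

lemma linearMap_ext {M : Type*} [AddCommGroup M] [Module (ZMod n) M]
    {u v : ModN G n →ₗ[ZMod n] M} (h : ∀ x, u (mkQ n x) = v (mkQ n x)) : u = v :=
  LinearMap.ext <| mkQ_surjective.forall.2 h

lemma map_surjective {f : G →+ H} (hf : Surjective f) :
    Surjective (map f : ModN G n → ModN H n) := by
  intro y
  obtain ⟨x, rfl⟩ := mkQ_surjective y
  obtain ⟨z, rfl⟩ := hf x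
  exact ⟨mkQ n z, rfl⟩

def mapEquiv (e : G ≃+ H) : ModN G n ≃ₗ[ZMod n] ModN H n :=
  .ofLinearMap (map (e : G →+ H)) (map (e.symm : H →+ G))
    (linearMap_ext fun x => by simp only [LinearMap.comp_apply, map_mkQ]; simp)
    (linearMap_ext fun x => by simp only [LinearMap.comp_apply, map_mkQ]; simp)

lemma exists_eq_and_mkQ_eq {π : G →+ H} (hπ : Surjective π) {t : H} {v : ModN G n}
    (htv : mkQ n t = map π v) : ∃ x, π x = t ∧ mkQ n x = v := by
  obtain ⟨x, rfl⟩ := mkQ_surjective v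
  rw [map_mkQ, eq_comm, ← sub_eq_zero, ← map_sub, mkQ_eq_zero_iff] at htv
  obtain ⟨y, hy⟩ := htv
  obtain ⟨z, rfl⟩ := hπ y
  refine ⟨x - n • z, by rw [map_sub, map_nsmul, hy, sub_sub_cancel], ?_⟩
  rw [map_sub, sub_eq_self, mkQ_eq_zero_iff]
  exact ⟨z, rfl⟩

lemma exists_lift_with_reduction {ι : Type*} (b : Module.Basis ι ℤ G) {π : G →+ H}
    (hπ : Surjective π) (h : H →+ H) (g : ModN G n →ₗ[ZMod n] ModN G n)
    (hg : ∀ v, map π (g v) = map h (map π v)) :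
    ∃ f : G →ₗ[ℤ] G, (∀ x, π (f x) = h (π x)) ∧ ∀ x, mkQ n (f x) = g (mkQ n x) := by
  choose c hcπ hcg using fun i => exists_eq_and_mkQ_eq hπ (t := h (π (b i)))
    (v := g (mkQ n (b i))) (by rw [hg, map_mkQ, map_mkQ])
  refine ⟨b.constr ℤ c, fun x => ?_, fun x => ?_⟩
  · exact LinearMap.congr_fun (b.ext (f₁ := π.toIntLinearMap ∘ₗ b.constr ℤ c)
      (f₂ := (h.comp π).toIntLinearMap) fun i => by simp [hcπ]) x
  · exact LinearMap.congr_fun (b.ext (f₁ := (mkQ n).toIntLinearMap ∘ₗ b.constr ℤ c)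
      (f₂ := (g.toAddMonoidHom.comp (mkQ n)).toIntLinearMap) fun i => by simp [hcg]) x

variable [NeZero n] {ι : Type*} [Fintype ι] [DecidableEq ι]

lemma basis_repr_mkQ (b : Module.Basis ι ℤ G) (x : G) (i : ι) :
    (basis b).repr (mkQ n x) i = b.repr x i := by
  nth_rewrite 1 [← b.sum_repr x]
  simp only [map_sum, map_zsmul, ← basis_apply_eq_mkQ, ← Int.cast_smul_eq_zsmul (ZMod n)]
  simp [Finsupp.single_apply]

lemma intCast_det_eq_det (b : Module.Basis ι ℤ G) {f : G →ₗ[ℤ] G}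
    {g : ModN G n →ₗ[ZMod n] ModN G n} (hfg : ∀ x, mkQ n (f x) = g (mkQ n x)) :
    ((LinearMap.det f : ℤ) : ZMod n) = LinearMap.det g := by
  have hmatrix : LinearMap.toMatrix (basis b) (basis b) g =
      (LinearMap.toMatrix b b f).map (Int.castRingHom (ZMod n)) := by
    ext i j
    simp [LinearMap.toMatrix_apply, basis_apply_eq_mkQ, ← hfg, basis_repr_mkQ]
  rw [← LinearMap.det_toMatrix b, ← LinearMap.det_toMatrix (basis b), hmatrix]
  exact RingHom.map_det (Int.castRingHom (ZMod n)) _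

end ModN

theorem stmt_2_general (p : ℕ) (hp : p.Prime) (n : ℕ) (T : Type) [AddCommGroup T]
    (π : (Fin n → ℤ) →+ T) (hπ : Function.Surjective π)
    (h : T ≃+ T) :
    ∃ f : (Fin n → ℤ) →ₗ[ℤ] (Fin n → ℤ),
      (∀ v, π (f v) = h (π v)) ∧ ¬ (p : ℤ) ∣ LinearMap.det f := by
  have : Fact p.Prime := ⟨hp⟩
  obtain ⟨g, hg⟩ := (ModN.map (n := p) π).exists_linearEquiv_comp_eq_of_surjective
    (ModN.map_surjective hπ) (ModN.mapEquiv h)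
  obtain ⟨f, hfπ, hfg⟩ :=
    ModN.exists_lift_with_reduction (Pi.basisFun ℤ (Fin n)) hπ h g.toLinearMap hg
  refine ⟨f, hfπ, fun hdvd => (LinearEquiv.isUnit_det' g).ne_zero ?_⟩
  rwa [← ModN.intCast_det_eq_det (Pi.basisFun ℤ (Fin n)) hfg, ZMod.intCast_zmod_eq_zero_iff_dvd]

/-- Let `T` be a finite abelian `p`-group (`p` prime), `π : F → T` a surjection
from the finitely generated free abelian group `F = Fin n → ℤ`, and `h : T → T` an automorphism.
Then there is an endomorphism `f` of `F` lifting `h` (i.e. `π ∘ f = h ∘ π`) whose determinant is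
not divisible by `p`. -/
theorem stmt_2 (p : ℕ) (hp : p.Prime) (n : ℕ) (T : Type) [AddCommGroup T] [Fintype T]
    (hT : ∀ x : T, ∃ k : ℕ, (p ^ k : ℕ) • x = 0)
    (π : (Fin n → ℤ) →+ T) (hπ : Function.Surjective π)
    (h : T ≃+ T) :
    ∃ f : (Fin n → ℤ) →ₗ[ℤ] (Fin n → ℤ),
      (∀ v, π (f v) = h (π v)) ∧ ¬ (p : ℤ) ∣ LinearMap.det f :=
  stmt_2_general p hp n T π hπ h
end

section
/- Let T be a finite abelian group, π : F → T a surjection from a finitely generated free abelian group F, and h : T → T an automorphism. Then there exists an endomorphism f : F → F with π ∘ f = h ∘ π and gcd(det f, |T|) = 1. -/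
/-!
Take a Smith basis `bᵢ` of `F` with `ker π = span {dᵢ bᵢ}` and let `E bᵢ = dᵢ ^ N! bᵢ`, where
`N = |T|`. Then `E` maps `F` into `ker π`, and by Fermat `E ≡ id` on `ker π` modulo every prime
`p ≤ N`, in particular every `p ∣ N`. Correcting an arbitrary lift `f₀` of `h` to
`f = f₀ + E (1 - f₀)` keeps it a lift and makes `f ≡ id` on `ker π` mod `p`. Then `f` is injective
mod `p`: if `f v ∈ pF`, then `π v ∈ pT` because `h` is an automorphism, so `v ∈ ker π + pF`, and on
`ker π` the map `f` is the identity mod `p`. Hence `p ∤ det f`.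
-/

open Submodule Set

theorem Int.prime_dvd_mul_one_sub_pow (p : ℕ) [Fact p.Prime] (d : ℤ) {k : ℕ} (hk : p - 1 ∣ k) :
    (p : ℤ) ∣ d * (1 - d ^ k) := by
  rw [← ZMod.intCast_zmod_eq_zero_iff_dvd]
  push_cast
  rcases eq_or_ne (d : ZMod p) 0 with hd | hd
  · rw [hd, zero_mul]
  · obtain ⟨m, rfl⟩ := hk
    rw [pow_mul, ZMod.pow_card_sub_one_eq_one hd, one_pow, sub_self, mul_zero]

theorem Module.Basis.exists_span_smul_eq {R M ι : Type*} [CommRing R] [IsDomain R]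
    [IsPrincipalIdealRing R] [AddCommGroup M] [Module R M] [Finite ι]
    (b : Module.Basis ι R M) (K : Submodule R M) :
    ∃ (b' : Module.Basis ι R M) (d : ι → R), K = span R (range fun i => d i • b' i) := by
  obtain ⟨n, bM, bK, e, a, hsnf⟩ := K.smithNormalForm b
  refine ⟨bM, Function.extend e a 0, le_antisymm ?_ ?_⟩
  · have hK : K = span R (range fun j => (bK j : M)) := by
      rw [range_comp' .., ← K.coe_subtype, ← map_span, bK.span_eq, map_subtype_top]
    rw [hK]
    refine span_mono (range_subset_iff.mpr fun j => ⟨e j, ?_⟩)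
    simp [e.injective.extend_apply, hsnf]
  · refine span_le.mpr (range_subset_iff.mpr fun i => ?_)
    by_cases hi : ∃ j, e j = i
    · obtain ⟨j, rfl⟩ := hi
      rw [e.injective.extend_apply, ← hsnf]
      exact (bK j).2
    · simp [Function.extend_apply' _ _ _ hi]

theorem Submodule.exists_retraction_mod_primes_le {M : Type*} [AddCommGroup M]
    [Module.Free ℤ M] [Module.Finite ℤ M] (K : Submodule ℤ M) (N : ℕ) :
    ∃ E : M →ₗ[ℤ] M, (∀ x, E x ∈ K) ∧
      ∀ p : ℕ, p.Prime → p ≤ N → ∀ x ∈ K, ∃ y, x - E x = (p : ℤ) • y := by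
  obtain ⟨b, d, hK⟩ := (Module.Free.chooseBasis ℤ M).exists_span_smul_eq K
  refine ⟨b.constr ℤ fun i => d i ^ N.factorial • b i, fun x => ?_, fun p hp hpN => ?_⟩
  · refine (b.constr_range ℤ).le.trans (span_le.mpr ?_) (LinearMap.mem_range_self _ x)
    rintro _ ⟨i, rfl⟩
    dsimp only
    rw [SetLike.mem_coe, ← Nat.sub_one_add_one N.factorial_ne_zero, pow_succ, mul_smul, hK]
    exact smul_mem _ _ (subset_span ⟨i, rfl⟩)
  · have := Fact.mk hp
    have hp1 : p - 1 ∣ N.factorial := Nat.dvd_factorial (Nat.sub_pos_of_lt hp.one_lt) (by omega)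
    intro x hx
    rw [hK] at hx
    refine span_induction ?_ ?_ ?_ ?_ hx
    · rintro _ ⟨i, rfl⟩
      obtain ⟨c, hc⟩ := Int.prime_dvd_mul_one_sub_pow p (d i) hp1
      refine ⟨c • b i, ?_⟩
      rw [map_smul, b.constr_basis]
      linear_combination (norm := module) hc • b i
    · exact ⟨0, by simp⟩
    · rintro x y - - ⟨x', hx⟩ ⟨y', hy⟩
      exact ⟨x' + y', by rw [map_add, smul_add, ← hx, ← hy]; abel⟩
    · rintro a x - ⟨x', hx⟩
      exact ⟨a • x', by rw [map_smul, ← smul_sub, hx, smul_comm]⟩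

theorem AddMonoidHom.exists_lift_congr_id_mod_primes_on_ker {M T : Type*} [AddCommGroup M]
    [Module.Free ℤ M] [Module.Finite ℤ M] [AddCommGroup T] (π : M →+ T)
    (hπ : Function.Surjective π) (φ : T →+ T) (N : ℕ) :
    ∃ f : M →ₗ[ℤ] M, (∀ v, π (f v) = φ (π v)) ∧
      ∀ p : ℕ, p.Prime → p ≤ N → ∀ x, π x = 0 → ∃ y, f x - x = (p : ℤ) • y := by
  obtain ⟨f₀, hf₀⟩ := Module.projective_lifting_property π.toIntLinearMap
    (φ.toIntLinearMap ∘ₗ π.toIntLinearMap) hπ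
  obtain ⟨E, hEK, hE⟩ := (LinearMap.ker π.toIntLinearMap).exists_retraction_mod_primes_le N
  refine ⟨f₀ + E ∘ₗ (LinearMap.id - f₀), fun v => ?_, fun p hp hpN x hx => ?_⟩
  · have hEv : π (E ((LinearMap.id - f₀ : M →ₗ[ℤ] M) v)) = 0 := hEK _
    rw [LinearMap.add_apply, LinearMap.comp_apply, map_add, hEv, add_zero]
    exact LinearMap.congr_fun hf₀ v
  · have hf₀x : π (f₀ x - x) = 0 := by
      simpa [hx] using LinearMap.congr_fun hf₀ x
    obtain ⟨y, hy⟩ := hE p hp hpN _ hf₀x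
    refine ⟨y, ?_⟩
    rw [← hy]
    simp only [LinearMap.add_apply, LinearMap.comp_apply, LinearMap.sub_apply, LinearMap.id_apply,
      map_sub]
    abel

theorem exists_eq_zsmul_of_apply_eq_zsmul {M T : Type*} [AddCommGroup M] [AddCommGroup T]
    {π : M →+ T} (hπ : Function.Surjective π) (h : T ≃+ T) {f : M →+ M}
    (hf : ∀ v, π (f v) = h (π v)) {n : ℤ} (hker : ∀ x, π x = 0 → ∃ y, f x - x = n • y)
    {v : M} (hv : ∃ y, f v = n • y) : ∃ y, v = n • y := by
  obtain ⟨y, hy⟩ := hv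
  obtain ⟨z, hz⟩ := hπ (h.symm (π y))
  have hk : π (v - n • z) = 0 := by
    apply h.injective
    rw [map_sub, map_zsmul, hz, map_sub, map_zsmul, h.apply_symm_apply, ← hf, hy, map_zsmul,
      sub_self, map_zero]
  obtain ⟨w, hw⟩ := hker _ hk
  refine ⟨z + y - f z - w, ?_⟩
  rw [map_sub, map_zsmul, hy] at hw
  rw [smul_sub, smul_sub, smul_add, ← hw]
  abel

theorem LinearMap.not_dvd_det_of_injective_mod_prime {ι : Type*} [Fintype ι] [DecidableEq ι]
    (f : (ι → ℤ) →ₗ[ℤ] (ι → ℤ)) (p : ℕ) [Fact p.Prime]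
    (hf : ∀ v, (∃ y, f v = (p : ℤ) • y) → ∃ y, v = (p : ℤ) • y) :
    ¬ (p : ℤ) ∣ LinearMap.det f := by
  have reduce_eq_zero {v : ι → ℤ} : (Int.cast ∘ v : ι → ZMod p) = 0 ↔ ∃ y, v = (p : ℤ) • y := by
    refine ⟨fun hv => ?_, ?_⟩
    · choose y hy using fun i => (ZMod.intCast_zmod_eq_zero_iff_dvd (v i) p).mp (congrFun hv i)
      exact ⟨y, funext hy⟩
    · rintro ⟨y, rfl⟩
      ext i
      simp
  intro hdvd
  set A := LinearMap.toMatrix' f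
  have hdet : ((Int.castRingHom (ZMod p)).mapMatrix A).det = 0 := by
    rw [← RingHom.map_det, LinearMap.det_toMatrix']
    exact (ZMod.intCast_zmod_eq_zero_iff_dvd _ p).mpr hdvd
  obtain ⟨w, hw0, hw⟩ := Matrix.exists_mulVec_eq_zero_iff.mpr hdet
  set v : ι → ℤ := fun i => (w i).val
  have hvw : (Int.cast ∘ v : ι → ZMod p) = w := funext fun i => by simp [v]
  have hfv : (Int.cast ∘ f v : ι → ZMod p) = 0 := by
    rw [← hw, ← hvw, ← LinearMap.toMatrix'_mulVec f]
    exact funext (RingHom.map_mulVec (Int.castRingHom (ZMod p)) A v)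
  exact hw0 (hvw ▸ reduce_eq_zero.mpr (hf v (reduce_eq_zero.mp hfv)))

/-- Let `T` be a finite abelian group, `π : F → T` a surjection from the
finitely generated free abelian group `F = Fin n → ℤ`, and `h : T → T` an automorphism.  Then
there is an endomorphism `f` of `F` lifting `h` (i.e. `π ∘ f = h ∘ π`) whose determinant is
coprime to `|T|`. -/
theorem stmt_3 (n : ℕ) (T : Type) [AddCommGroup T] [Fintype T]
    (π : (Fin n → ℤ) →+ T) (hπ : Function.Surjective π)
    (h : T ≃+ T) :
    ∃ f : (Fin n → ℤ) →ₗ[ℤ] (Fin n → ℤ),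
      (∀ v, π (f v) = h (π v)) ∧ IsCoprime (LinearMap.det f) (Fintype.card T : ℤ) := by
  obtain ⟨f, hlift, hker⟩ :=
    π.exists_lift_congr_id_mod_primes_on_ker hπ h.toAddMonoidHom (Fintype.card T)
  refine ⟨f, hlift, Int.isCoprime_iff_gcd_eq_one.mpr (Nat.coprime_of_dvd fun p hp hpf hpT => ?_)⟩
  have := Fact.mk hp
  have hpT : p ≤ Fintype.card T := Nat.le_of_dvd Fintype.card_pos (by simpa using hpT)
  refine f.not_dvd_det_of_injective_mod_prime p (fun v => ?_) (Int.natCast_dvd.mpr hpf)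
  exact exists_eq_zsmul_of_apply_eq_zsmul hπ h (f := f.toAddMonoidHom) hlift (hker p hp hpT)
end

section
/- Let H be a finitely generated abelian group, and let π : F → H and π' : F' → H be two surjections from finitely generated free abelian groups of the same rank g, where g is strictly greater than the rank of H. Then the presentations are equivalent: there exists an isomorphism f : F → F' with π' ∘ f = π. -/
/-!
Write `H ≃ G × ℤ/k` with `k` a multiple of the exponent of `G` (`k = 0` if `H` is infinite).
Euclid's algorithm, run through transvections of `ℤ^g`, makes the `ℤ/k`-component of a
presentation `ℤ^g → G × ℤ/k` equal to `d • v₀` with `d` a unit, and a second coordinate lets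
one turn `d` into `1`. The `G`-component on the remaining coordinates then generates `G`, so one
more transvection brings the presentation into the form `v ↦ (w (tail v), v₀)` with `w` a
presentation of `G` of rank `g - 1`. The same reduction applied to `r` generators of `H` shows
that `G` is generated by `r - 1` elements, and induction on `r` makes `w` unique up to
equivalence.
-/

open Function

section PresentationEquiv

variable {R M N N' : Type*} [Semiring R] [AddCommMonoid M] [Module R M]
  [AddCommMonoid N] [Module R N] [AddCommMonoid N'] [Module R N']

def PresentationEquiv (π π' : M →ₗ[R] N) : Prop :=
  ∃ f : M ≃ₗ[R] M, π' ∘ₗ f.toLinearMap = π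

namespace PresentationEquiv

variable {π₁ π₂ π₃ : M →ₗ[R] N}

theorem symm (h : PresentationEquiv π₁ π₂) : PresentationEquiv π₂ π₁ := by
  obtain ⟨f, rfl⟩ := h
  exact ⟨f.symm, by ext; simp⟩

theorem trans (h₁₂ : PresentationEquiv π₁ π₂) (h₂₃ : PresentationEquiv π₂ π₃) :
    PresentationEquiv π₁ π₃ := by
  obtain ⟨f, rfl⟩ := h₁₂
  obtain ⟨g, rfl⟩ := h₂₃
  exact ⟨f.trans g, rfl⟩

theorem of_subsingleton [Subsingleton N] (π π' : M →ₗ[R] N) : PresentationEquiv π π' :=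
  ⟨LinearEquiv.refl R M, Subsingleton.elim _ _⟩

theorem linearEquiv_comp_iff (E : N ≃ₗ[R] N') :
    PresentationEquiv (E.toLinearMap ∘ₗ π₁) (E.toLinearMap ∘ₗ π₂) ↔ PresentationEquiv π₁ π₂ := by
  refine exists_congr fun f => ⟨fun h => ?_, fun h => by rw [LinearMap.comp_assoc, h]⟩
  ext v
  simpa using congr(E.symm ($h v))

end PresentationEquiv

end PresentationEquiv

section Transvection

variable {R ι : Type*} [CommRing R] [DecidableEq ι]

def coordTransvection {i t : ι} (hit : i ≠ t) (c : R) : (ι → R) ≃ₗ[R] (ι → R) :=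
  LinearEquiv.transvection (f := c • LinearMap.proj t) (v := Pi.single i 1) (by simp [hit.symm])

theorem coordTransvection_apply {i t : ι} (hit : i ≠ t) (c : R) (v : ι → R) :
    coordTransvection hit c v = v + (c * v t) • Pi.single i 1 :=
  rfl

end Transvection

section Euclid

variable {n : ℕ}

theorem Int.exists_linearEquiv_sum_natAbs_lt (ψ : (Fin (n + 1) → ℤ) →ₗ[ℤ] ℤ) {j : Fin n}
    (hj : ψ (Pi.single j.succ 1) ≠ 0) :
    ∃ f : (Fin (n + 1) → ℤ) ≃ₗ[ℤ] (Fin (n + 1) → ℤ),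
      ∑ l : Fin n, (ψ (f (Pi.single l.succ 1))).natAbs <
        ∑ l : Fin n, (ψ (Pi.single l.succ 1)).natAbs := by
  set a := ψ (Pi.single 0 1)
  set b := ψ (Pi.single j.succ 1)
  -- `a` is replaced by `a % b`, which is then swapped into the place of `b`
  let swap := LinearEquiv.funCongrLeft ℤ ℤ (Equiv.swap 0 j.succ)
  have hswap (m : Fin (n + 1)) : swap (Pi.single m 1) = Pi.single (Equiv.swap 0 j.succ m) 1 := by
    ext i
    simp [swap, Pi.single_apply, Equiv.swap_apply_eq_iff]
  let f := swap.trans (coordTransvection (Fin.succ_ne_zero j) (-(a / b)))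
  have hf (l : Fin n) :
      ψ (f (Pi.single l.succ 1)) = if l = j then a % b else ψ (Pi.single l.succ 1) := by
    simp only [f, LinearEquiv.trans_apply, hswap, coordTransvection_apply]
    split_ifs with hl
    · subst hl
      simp only [Equiv.swap_apply_right, Pi.single_eq_same, mul_one, map_add, map_smul,
        smul_eq_mul, Int.emod_def]
      ring
    · rw [Equiv.swap_apply_of_ne_of_ne (Fin.succ_ne_zero l) (by simpa using hl)]
      simp
  have hr : (a % b).natAbs < b.natAbs := by
    have := Int.emod_nonneg a hj
    have := Int.emod_lt a hj
    omega
  refine ⟨f, Finset.sum_lt_sum (fun l _ => ?_) ⟨j, Finset.mem_univ _, by simpa [hf] using hr⟩⟩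
  rw [hf]
  split_ifs with hl
  · exact hl ▸ hr.le
  · rfl

theorem Int.exists_linearEquiv_apply_eq_mul_apply_zero (ψ : (Fin (n + 1) → ℤ) →ₗ[ℤ] ℤ) :
    ∃ (f : (Fin (n + 1) → ℤ) ≃ₗ[ℤ] (Fin (n + 1) → ℤ)) (d : ℤ), ∀ v, ψ (f v) = d * v 0 := by
  induction hμ : ∑ l : Fin n, (ψ (Pi.single l.succ 1)).natAbs using Nat.strong_induction_on
    generalizing ψ with
  | _ μ ih =>
  by_cases htail : ∀ j : Fin n, ψ (Pi.single j.succ 1) = 0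
  · refine ⟨LinearEquiv.refl ℤ _, ψ (Pi.single 0 1), fun v => ?_⟩
    have hψ : ψ = ψ (Pi.single 0 1) • LinearMap.proj 0 := by
      refine LinearMap.pi_ext' fun i => LinearMap.ext_ring ?_
      cases i using Fin.cases <;> simp [htail]
    simpa [mul_comm] using LinearMap.congr_fun hψ v
  obtain ⟨j, hj⟩ := not_forall.mp htail
  obtain ⟨f, hf⟩ := exists_linearEquiv_sum_natAbs_lt ψ hj
  obtain ⟨g, d, hg⟩ := ih _ (hμ ▸ hf) (ψ ∘ₗ f.toLinearMap) rfl
  exact ⟨g.trans f, d, hg⟩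

theorem ZMod.exists_linearEquiv_apply_eq_mul_apply_zero {k : ℕ}
    (ψ : (Fin (n + 1) → ℤ) →ₗ[ℤ] ZMod k) :
    ∃ (f : (Fin (n + 1) → ℤ) ≃ₗ[ℤ] (Fin (n + 1) → ℤ)) (d : ZMod k), ∀ v, ψ (f v) = d * v 0 := by
  obtain ⟨ψ', rfl⟩ := Module.projective_lifting_property (Int.castAddHom (ZMod k)).toIntLinearMap
    ψ ZMod.intCast_surjective
  obtain ⟨f, d, hf⟩ := Int.exists_linearEquiv_apply_eq_mul_apply_zero ψ'
  exact ⟨f, d, fun v => by simp [hf]⟩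

theorem ZMod.exists_linearEquiv_mul_apply_zero_eq {k : ℕ} {d : ZMod k} (hd : IsUnit d) :
    ∃ f : (Fin (n + 2) → ℤ) ≃ₗ[ℤ] (Fin (n + 2) → ℤ), ∀ v, d * (f v 0 : ZMod k) = v 0 := by
  obtain ⟨c₁, hc₁⟩ := ZMod.intCast_surjective (hd.unit⁻¹ * (1 - d) : ZMod k)
  obtain ⟨c₂, hc₂⟩ := ZMod.intCast_surjective (d - 1)
  have hdc₁ : d * c₁ = 1 - d := by rw [hc₁, ← mul_assoc, IsUnit.mul_val_inv, one_mul]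
  have h01 : (0 : Fin (n + 2)) ≠ 1 := Fin.zero_ne_one
  -- the values `(d, 0)` of `v ↦ d * v 0` on the first two basis vectors become
  -- `(d, 1 - d)`, then `(1, 1 - d)`, then `(1, 0)`
  refine ⟨(coordTransvection h01 c₂).trans
    ((coordTransvection h01.symm 1).trans (coordTransvection h01 c₁)), fun v => ?_⟩
  simp [coordTransvection_apply, h01, h01.symm]
  linear_combination (↑(v 0) + ↑(v 1) + ↑c₂ * ↑(v 1) : ZMod k) * hdc₁ + (v 1 : ZMod k) * hc₂

end Euclid

theorem LinearMap.map_fin_cons {R M : Type*} [Semiring R] [AddCommMonoid M] [Module R M] {n : ℕ}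
    (π : (Fin (n + 1) → R) →ₗ[R] M) (a : R) (u : Fin n → R) :
    π (Fin.cons a u) = a • π (Pi.single 0 1) + π (Fin.cons 0 u) := by
  rw [← map_smul, ← map_add]
  congr 1
  ext i
  cases i using Fin.cases <;> simp

section ProdZMod

variable {G : Type*} [AddCommGroup G] {k n : ℕ}

def consPresentation (w : (Fin n → ℤ) →ₗ[ℤ] G) (k : ℕ) : (Fin (n + 1) → ℤ) →ₗ[ℤ] G × ZMod k :=
  (w ∘ₗ LinearMap.funLeft ℤ ℤ Fin.succ).prod
    ((Int.castAddHom (ZMod k)).toIntLinearMap ∘ₗ LinearMap.proj 0)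

@[simp]
theorem consPresentation_apply (w : (Fin n → ℤ) →ₗ[ℤ] G) (v : Fin (n + 1) → ℤ) :
    consPresentation w k v = (w (Fin.tail v), (v 0 : ZMod k)) :=
  rfl

theorem PresentationEquiv.cons {w w' : (Fin n → ℤ) →ₗ[ℤ] G} (h : PresentationEquiv w w') :
    PresentationEquiv (consPresentation w k) (consPresentation w' k) := by
  obtain ⟨f, rfl⟩ := h
  let cons := Fin.consLinearEquiv ℤ fun _ : Fin (n + 1) => ℤ
  refine ⟨cons.symm.trans (((LinearEquiv.refl ℤ ℤ).prodCongr f).trans cons),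
    LinearMap.ext fun _ => rfl⟩

theorem isUnit_of_surjective_of_snd_eq_mul {π : (Fin (n + 1) → ℤ) →ₗ[ℤ] G × ZMod k}
    (hπ : Surjective π) {d : ZMod k} (hd : ∀ v, (π v).2 = d * v 0) : IsUnit d := by
  obtain ⟨v, hv⟩ := hπ (0, 1)
  exact IsUnit.of_mul_eq_one (b := (v 0 : ZMod k)) (by rw [← hd, hv])

theorem surjective_fst_cons_zero (hk : AddMonoid.exponent G ∣ k)
    {π : (Fin (n + 1) → ℤ) →ₗ[ℤ] G × ZMod k} (hπ : Surjective π) {d : ZMod k}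
    (hd : ∀ v, (π v).2 = d * v 0) : Surjective fun u => (π (Fin.cons 0 u)).1 := by
  intro x
  obtain ⟨v, hv⟩ := hπ (x, 0)
  have hv0 : ((v 0 : ℤ) : ZMod k) = 0 := by
    rw [← (isUnit_of_surjective_of_snd_eq_mul hπ hd).mul_right_eq_zero, ← hd, hv]
  obtain ⟨t, ht⟩ := (ZMod.intCast_zmod_eq_zero_iff_dvd _ _).mp hv0
  have hkill : ((k : ℤ) * t) • (π (Pi.single 0 1)).1 = 0 := by
    rw [mul_comm, mul_smul, natCast_zsmul,
      AddMonoid.exponent_dvd_iff_forall_nsmul_eq_zero.mp hk, smul_zero]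
  refine ⟨Fin.tail v, ?_⟩
  have hcons := congr_arg Prod.fst (π.map_fin_cons (v 0) (Fin.tail v))
  rw [Fin.cons_self_tail, hv, ht] at hcons
  simpa [hkill] using hcons.symm

theorem exists_surjective_of_surjective_prod_zmod (hk : AddMonoid.exponent G ∣ k)
    {ρ : (Fin (n + 1) → ℤ) →ₗ[ℤ] G × ZMod k} (hρ : Surjective ρ) :
    ∃ w : (Fin n → ℤ) →ₗ[ℤ] G, Surjective w := by
  obtain ⟨f, d, hf⟩ := ZMod.exists_linearEquiv_apply_eq_mul_apply_zero (LinearMap.snd ℤ G _ ∘ₗ ρ)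
  exact ⟨LinearMap.fst ℤ G _ ∘ₗ ρ ∘ₗ f.toLinearMap ∘ₗ LinearMap.vecCons 0 LinearMap.id,
    surjective_fst_cons_zero hk (π := ρ ∘ₗ f.toLinearMap) (hρ.comp f.surjective) hf⟩

theorem exists_presentationEquiv_consPresentation (hk : AddMonoid.exponent G ∣ k)
    {π : (Fin (n + 2) → ℤ) →ₗ[ℤ] G × ZMod k} (hπ : Surjective π) :
    ∃ w : (Fin (n + 1) → ℤ) →ₗ[ℤ] G, Surjective w ∧ PresentationEquiv (consPresentation w k) π := by
  obtain ⟨f₁, d, hf₁⟩ :=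
    ZMod.exists_linearEquiv_apply_eq_mul_apply_zero (LinearMap.snd ℤ G _ ∘ₗ π)
  obtain ⟨f₂, hf₂⟩ := ZMod.exists_linearEquiv_mul_apply_zero_eq (n := n)
    (isUnit_of_surjective_of_snd_eq_mul (π := π ∘ₗ f₁.toLinearMap) (hπ.comp f₁.surjective) hf₁)
  set π₂ := π ∘ₗ (f₂.trans f₁).toLinearMap
  have hπ₂ (v : Fin (n + 2) → ℤ) : (π₂ v).2 = 1 * v 0 := by
    rw [one_mul, ← hf₂]
    exact hf₁ (f₂ v)
  have hw := surjective_fst_cons_zero hk (π := π₂) (hπ.comp (f₂.trans f₁).surjective) hπ₂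
  -- `f₃` clears the `G`-component of the first basis vector
  obtain ⟨u, hu⟩ := hw (π₂ (Pi.single 0 1)).1
  let f₃ := LinearEquiv.transvection (f := LinearMap.proj 0)
    (v := -(Fin.cons 0 u : Fin (n + 2) → ℤ)) (by simp)
  refine ⟨LinearMap.fst ℤ G _ ∘ₗ π₂ ∘ₗ LinearMap.vecCons 0 LinearMap.id, hw,
    f₃.trans (f₂.trans f₁), LinearMap.ext fun v => ?_⟩
  have hf₃ : f₃ v = v - v 0 • Fin.cons 0 u := by
    rw [LinearEquiv.transvection.apply, LinearMap.proj_apply, smul_neg, ← sub_eq_add_neg]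
  have hcons := π₂.map_fin_cons (v 0) (Fin.tail v)
  rw [Fin.cons_self_tail] at hcons
  change π₂ (f₃ v) = _
  rw [hf₃, map_sub, map_smul]
  refine Prod.ext ?_ ?_
  · simp [hcons, hu, Matrix.vecCons]
  · simp [hπ₂]

end ProdZMod

section LargestCyclicFactor

open DirectSum

/-- Since `ZMod 0 = ℤ`, the case `k = 0` splits off a free summand and puts no condition on `G`. -/
def HasLargestCyclicFactor (H : Type) [AddCommGroup H] : Prop :=
  ∃ (k : ℕ) (G : Type) (_ : AddCommGroup G),
    AddMonoid.exponent G ∣ k ∧ Nonempty (H ≃+ G × ZMod k)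

namespace HasLargestCyclicFactor

variable {H H' : Type} [AddCommGroup H] [AddCommGroup H']

theorem of_addEquiv (h : HasLargestCyclicFactor H) (E : H ≃+ H') : HasLargestCyclicFactor H' :=
  let ⟨k, G, _, hk, ⟨E'⟩⟩ := h
  ⟨k, G, _, hk, ⟨E.symm.trans E'⟩⟩

theorem of_subsingleton [Subsingleton H] : HasLargestCyclicFactor H :=
  ⟨1, H, _, AddMonoid.exponent_dvd_of_forall_nsmul_eq_zero fun _ => Subsingleton.elim _ _,
    ⟨AddEquiv.prodUnique.symm⟩⟩

theorem prod_zmod_zero (H : Type) [AddCommGroup H] : HasLargestCyclicFactor (H × ZMod 0) :=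
  ⟨0, H, _, dvd_zero _, ⟨AddEquiv.refl _⟩⟩

theorem prod_zmod_prime_pow (h : HasLargestCyclicFactor H) {p : ℕ} (hp : p.Prime) (e : ℕ) :
    HasLargestCyclicFactor (H × ZMod (p ^ e)) := by
  obtain ⟨k, G, _, hk, ⟨E⟩⟩ := h
  by_cases hdvd : p ^ e ∣ k
  · refine ⟨k, G × ZMod (p ^ e), inferInstance, ?_, ⟨?_⟩⟩
    · rw [AddMonoid.exponent_prod, ZMod.exponent]
      exact lcm_dvd hk hdvd
    · exact (E.prodCongr (AddEquiv.refl _)).trans <| AddEquiv.prodAssoc.trans <|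
        ((AddEquiv.refl G).prodCongr AddEquiv.prodComm).trans AddEquiv.prodAssoc.symm
  -- `k = p ^ v * m` with `v < e` and `p ∤ m`; then `ℤ/k × ℤ/p^e ≃ ℤ/p^v × ℤ/(m p^e)`
  have hk0 : k ≠ 0 := by
    rintro rfl
    exact hdvd (dvd_zero _)
  set v := k.factorization p
  set m := k / p ^ v
  have hkvm : p ^ v * m = k := Nat.ordProj_mul_ordCompl_eq_self k p
  have hve : p ^ v ∣ p ^ e := by
    refine Nat.pow_dvd_pow p (not_lt.mp fun hev => hdvd ?_)
    exact (Nat.pow_dvd_pow p hev.le).trans (Nat.ordProj_dvd k p)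
  have hcop (j : ℕ) : (p ^ j).Coprime m := (Nat.coprime_ordCompl hp hk0).pow_left j
  refine ⟨m * p ^ e, G × ZMod (p ^ v), inferInstance, ?_, ⟨?_⟩⟩
  · rw [AddMonoid.exponent_prod, ZMod.exponent]
    refine lcm_dvd (hk.trans ?_) (hve.trans (dvd_mul_left _ _))
    rw [← hkvm, mul_comm]
    exact mul_dvd_mul_left m hve
  · let crt_k : ZMod k ≃+ ZMod (p ^ v) × ZMod m :=
      ((ZMod.ringEquivCongr hkvm.symm).trans (ZMod.chineseRemainder (hcop v))).toAddEquiv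
    let crt_e : ZMod (m * p ^ e) ≃+ ZMod m × ZMod (p ^ e) :=
      (ZMod.chineseRemainder (hcop e).symm).toAddEquiv
    exact (E.prodCongr (AddEquiv.refl _)).trans <|
      (((AddEquiv.refl G).prodCongr crt_k).prodCongr (AddEquiv.refl _)).trans <|
      (AddEquiv.prodAssoc.symm.prodCongr (AddEquiv.refl _)).trans <|
      AddEquiv.prodAssoc.trans ((AddEquiv.refl _).prodCongr crt_e.symm)

theorem prod_directSum (h : HasLargestCyclicFactor H) (ι : Type) [Fintype ι] (p e : ι → ℕ)
    (hp : ∀ i, (p i).Prime) : HasLargestCyclicFactor (H × ⨁ i, ZMod (p i ^ e i)) := by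
  refine Fintype.induction_empty_option (P := fun ι _ => ∀ (p e : ι → ℕ), (∀ i, (p i).Prime) →
    ∀ (H : Type) [AddCommGroup H], HasLargestCyclicFactor H →
      HasLargestCyclicFactor (H × ⨁ i, ZMod (p i ^ e i))) ?_ ?_ ?_ ι p e hp H h
  · intro α β _ σ ih p e hp H _ h
    exact (ih (p ∘ σ) (e ∘ σ) (fun i => hp _) H h).of_addEquiv
      ((AddEquiv.refl H).prodCongr
        (DirectSum.equivCongrLeft (β := fun i => ZMod (p i ^ e i)) σ.symm).symm)
  · intro p e hp H _ h
    exact h.of_addEquiv AddEquiv.prodUnique.symm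
  · intro α _ ih p e hp H _ h
    exact (ih (p ∘ some) (e ∘ some) (fun i => hp _) _
      (h.prod_zmod_prime_pow (hp none) (e none))).of_addEquiv <|
      AddEquiv.prodAssoc.trans ((AddEquiv.refl H).prodCongr
        (DirectSum.addEquivProdDirectSum (α := fun i => ZMod (p i ^ e i))).symm)

theorem finsupp (n : ℕ) : HasLargestCyclicFactor (Fin n →₀ ℤ) := by
  cases n with
  | zero => exact of_subsingleton
  | succ n =>
    exact (prod_zmod_zero (Fin n → ℤ)).of_addEquiv <| AddEquiv.prodComm.trans <|
      (Fin.consLinearEquiv ℤ fun _ => ℤ).toAddEquiv.trans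
        (Finsupp.linearEquivFunOnFinite ℤ ℤ _).symm.toAddEquiv

theorem of_fg [AddGroup.FG H] : HasLargestCyclicFactor H := by
  obtain ⟨n, ι, _, p, hp, e, ⟨E⟩⟩ := AddCommGroup.equiv_free_prod_directSum_zmod H
  exact ((finsupp n).prod_directSum ι p e hp).of_addEquiv E.symm

end HasLargestCyclicFactor

end LargestCyclicFactor

theorem presentationEquiv_of_surjective {r g : ℕ} (hrg : r < g) {H : Type} [AddCommGroup H]
    {ρ : (Fin r → ℤ) →ₗ[ℤ] H} (hρ : Surjective ρ) {π π' : (Fin g → ℤ) →ₗ[ℤ] H}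
    (hπ : Surjective π) (hπ' : Surjective π') : PresentationEquiv π π' := by
  induction r generalizing g H with
  | zero =>
    have : Subsingleton H := hρ.subsingleton
    exact .of_subsingleton π π'
  | succ r ih =>
    obtain ⟨n, rfl⟩ : ∃ n, g = n + 2 := ⟨g - 2, by omega⟩
    have : AddGroup.FG H := Module.Finite.iff_addGroup_fg.mp (Module.Finite.of_surjective ρ hρ)
    obtain ⟨k, G, _, hk, ⟨E⟩⟩ := HasLargestCyclicFactor.of_fg (H := H)
    let E' : H ≃ₗ[ℤ] G × ZMod k := E.toIntLinearEquiv
    have hE {m : ℕ} {σ : (Fin m → ℤ) →ₗ[ℤ] H} (hσ : Surjective σ) :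
        Surjective (E'.toLinearMap ∘ₗ σ) :=
      E'.surjective.comp hσ
    rw [← PresentationEquiv.linearEquiv_comp_iff E']
    obtain ⟨w, hw, hπw⟩ := exists_presentationEquiv_consPresentation hk (hE hπ)
    obtain ⟨w', hw', hπw'⟩ := exists_presentationEquiv_consPresentation hk (hE hπ')
    obtain ⟨ρ', hρ'⟩ := exists_surjective_of_surjective_prod_zmod hk (hE hρ)
    exact hπw.symm.trans ((ih (by omega) hρ' hw hw').cons.trans hπw')

/-- Let `H` be a finitely generated abelian group, and let `π, π'` be two
surjections onto `H` from the free abelian group of the same rank `g`, with `g` strictly greater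
than the rank of `H` (the minimal number of cyclic summands, expressed by the existence of a
generating set of cardinality `< g`).  Then the presentations are equivalent: there is an
automorphism `f` of the free abelian group with `π' ∘ f = π`. -/
theorem stmt_5 (g : ℕ) (H : Type) [AddCommGroup H]
    (π π' : (Fin g → ℤ) →+ H) (hπ : Function.Surjective π) (hπ' : Function.Surjective π')
    (hg : ∃ s : Finset H, Submodule.span ℤ (s : Set H) = ⊤ ∧ s.card < g) :
    ∃ f : (Fin g → ℤ) ≃ₗ[ℤ] (Fin g → ℤ), ∀ v, π' (f v) = π v := by
  obtain ⟨s, hs, hcard⟩ := hg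
  have hρ : Surjective (Fintype.linearCombination ℤ (Subtype.val ∘ s.equivFin.symm)) := by
    rw [← LinearMap.range_eq_top, Fintype.range_linearCombination, EquivLike.range_comp,
      Subtype.range_coe, hs]
  obtain ⟨f, hf⟩ := presentationEquiv_of_surjective hcard hρ (π := π.toIntLinearMap)
    (π' := π'.toIntLinearMap) hπ hπ'
  exact ⟨f, LinearMap.congr_fun hf⟩
end

section
/- Let j ≥ 1 and let λ be the symmetric bilinear form on H = (ℤ/2^j)² with values in ℚ/ℤ given with respect to the standard basis by the matrix (1/2^j)·[[2m, 1],[1, 2n]] for integers m, n. If at least one of m, n is even, then (H, λ) is isomorphic (as a linked group) to the form with matrix (1/2^j)·[[0,1],[1,0]]; if both m and n are odd, then (H, λ) is isomorphic to the form with matrix (1/2^j)·[[2,1],[1,2]]. -/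
/-!
On `(ℤ/2^j)²` the form is `u, u' ↦ B(u, u')/2^j` for the `ℤ/2^j`-valued bilinear form `B` with
Gram matrix `[[2m, 1], [1, 2n]]`, so everything reduces to congruences mod `2^j`. For
`v = e₁ + a e₂` one has `B(v, v) = 2(n a² + a + m)`, a quadratic with odd derivative, so Hensel's
lemma at `2` makes `B(v, v) = 2p` for any `p ≡ m (mod 2)`. Completing `v` to a basis `(v, w)`
with `B(v, w) = 1` leaves one more quadratic condition on `w`, again with odd linear coefficient.
-/

theorem Int.exists_two_pow_dvd_quadratic (c d e : ℤ) (hd : Odd d) (he : Even e) (k : ℕ) :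
    ∃ a : ℤ, 2 ^ k ∣ c * a ^ 2 + d * a + e := by
  suffices h : ∀ k : ℕ, ∃ a : ℤ, 2 ^ (k + 1) ∣ c * a ^ 2 + d * a + e by
    obtain ⟨a, ha⟩ := h k
    exact ⟨a, (pow_dvd_pow 2 k.le_succ).trans ha⟩
  intro k
  induction k with
  | zero => exact ⟨0, by simpa using he.two_dvd⟩
  | succ k ih =>
    obtain ⟨a, b, hb⟩ := ih
    obtain ⟨d', rfl⟩ := hd
    -- Newton step: `f (a + 2^(k+1) b) ≡ f a + 2^(k+1) b f'(a)` and `f'(a)` is odd.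
    refine ⟨a + 2 ^ (k + 1) * b, b * (1 + c * a + d') + 2 ^ k * c * b ^ 2, ?_⟩
    linear_combination hb

theorem ZMod.exists_odd_intCast_mul_eq_one {u : ℤ} (hu : Odd u) (j : ℕ) :
    ∃ s : ℤ, Odd s ∧ ((s * u : ℤ) : ZMod (2 ^ j)) = 1 := by
  obtain ⟨s, z, hsz⟩ := (Int.isCoprime_two_right.mpr hu).pow_right (n := j + 1)
  have hodd : Odd (s * u) := ⟨-(z * 2 ^ j), by linear_combination hsz⟩
  refine ⟨s, (Int.odd_mul.mp hodd).1, ?_⟩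
  rw [← Int.cast_one, ZMod.intCast_eq_intCast_iff_dvd_sub]
  exact ⟨2 * z, by push_cast; linear_combination -hsz⟩

theorem ZMod.isUnit_intCast_of_odd {u : ℤ} (hu : Odd u) (j : ℕ) : IsUnit (u : ZMod (2 ^ j)) := by
  obtain ⟨s, -, hs⟩ := ZMod.exists_odd_intCast_mul_eq_one hu j
  exact IsUnit.of_mul_eq_one_right (s : ZMod (2 ^ j)) (by push_cast at hs; exact hs)

theorem Prod.bijective_smul_add_smul {R : Type*} [CommRing R] {v w : R × R}
    (h : IsUnit (v.1 * w.2 - v.2 * w.1)) :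
    Function.Bijective fun ab : R × R => ab.1 • v + ab.2 • w := by
  obtain ⟨d, hd⟩ := h.exists_right_inv
  refine Function.bijective_iff_has_inverse.mpr
    ⟨fun c => (d * (w.2 * c.1 - w.1 * c.2), d * (v.1 * c.2 - v.2 * c.1)), fun ab => ?_, fun c => ?_⟩
  · ext <;> simp only [Prod.fst_add, Prod.snd_add, Prod.smul_fst, Prod.smul_snd, smul_eq_mul]
    · linear_combination ab.1 * hd
    · linear_combination ab.2 * hd
  · ext <;> simp only [Prod.fst_add, Prod.snd_add, Prod.smul_fst, Prod.smul_snd, smul_eq_mul]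
    · linear_combination c.1 * hd
    · linear_combination c.2 * hd

def zmodToRatCircle (q : ℕ) : ZMod q →+ AddCircle (1 : ℚ) :=
  ZMod.lift q ⟨zmultiplesHom _ ((1 / q : ℚ) : AddCircle (1 : ℚ)), by
    rcases eq_or_ne q 0 with rfl | hq
    · simp
    · simp [← AddCircle.coe_nsmul, hq]⟩

theorem zmodToRatCircle_intCast (q : ℕ) (N : ℤ) :
    zmodToRatCircle q N = ((N / q : ℚ) : AddCircle (1 : ℚ)) := by
  rw [zmodToRatCircle, ZMod.lift_coe, zmultiplesHom_apply, ← AddCircle.coe_zsmul, zsmul_eq_mul,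
    mul_one_div]

def linkingForm {R : Type*} [CommRing R] (m n : R) (u u' : R × R) : R :=
  2 * m * u.1 * u'.1 + u.1 * u'.2 + u.2 * u'.1 + 2 * n * u.2 * u'.2

theorem linkingForm_swap {R : Type*} [CommRing R] (m n : R) (u u' : R × R) :
    linkingForm m n u.swap u'.swap = linkingForm n m u u' := by
  simp only [linkingForm, Prod.fst_swap, Prod.snd_swap]
  ring

section
variable {q : ℕ} {A : Type*} [AddCommGroup A]
  (l : (ZMod q × ZMod q) →+ (ZMod q × ZMod q) →+ A) (φ : ZMod q →+ A)

theorem AddMonoidHom.apply_smul_smul_eq {x y : ZMod q × ZMod q} {s : ZMod q}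
    (h : l x y = φ s) (r r' : ZMod q) : l (r • x) (r' • y) = φ (r * r' * s) := by
  obtain ⟨a, rfl⟩ := ZMod.intCast_surjective r
  obtain ⟨b, rfl⟩ := ZMod.intCast_surjective r'
  rw [Int.cast_smul_eq_zsmul, Int.cast_smul_eq_zsmul, map_zsmul, map_zsmul,
    AddMonoidHom.smul_apply, h, mul_assoc, ← zsmul_eq_mul, ← zsmul_eq_mul, map_zsmul, map_zsmul,
    smul_comm]

theorem AddMonoidHom.eq_comp_linkingForm {m n : ZMod q}
    (h11 : l (1, 0) (1, 0) = φ (2 * m)) (h12 : l (1, 0) (0, 1) = φ 1)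
    (h21 : l (0, 1) (1, 0) = φ 1) (h22 : l (0, 1) (0, 1) = φ (2 * n)) (u u' : ZMod q × ZMod q) :
    l u u' = φ (linkingForm m n u u') := by
  have hdecomp : ∀ x : ZMod q × ZMod q, x = x.1 • (1, 0) + x.2 • (0, 1) := fun x => by
    ext <;> simp
  rw [hdecomp u, hdecomp u']
  simp only [map_add, AddMonoidHom.add_apply, l.apply_smul_smul_eq φ h11,
    l.apply_smul_smul_eq φ h12, l.apply_smul_smul_eq φ h21, l.apply_smul_smul_eq φ h22]
  simp only [← map_add, linkingForm]
  congr 1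
  simp
  ring
end

theorem exists_basis_linkingForm_of_even {m : ℤ} (n : ℤ) (hm : Even m) (j : ℕ) :
    ∃ v w : ZMod (2 ^ j) × ZMod (2 ^ j), IsUnit (v.1 * w.2 - v.2 * w.1) ∧
      linkingForm (m : ZMod (2 ^ j)) n v v = 0 ∧ linkingForm (m : ZMod (2 ^ j)) n v w = 1 ∧
      linkingForm (m : ZMod (2 ^ j)) n w w = 0 := by
  obtain ⟨a, ha⟩ := Int.exists_two_pow_dvd_quadratic n 1 m odd_one hm j
  obtain ⟨s, -, hs⟩ := ZMod.exists_odd_intCast_mul_eq_one (u := 1 + 2 * a * n) ⟨a * n, by ring⟩ j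
  replace ha := (ZMod.intCast_zmod_eq_zero_iff_dvd _ (2 ^ j)).mpr (by exact_mod_cast ha)
  push_cast at ha hs
  refine ⟨(1, a), (-s ^ 2 * n, -s ^ 2 * n * a + s), ?_, ?_, ?_, ?_⟩ <;>
    simp only [linkingForm]
  · convert IsUnit.of_mul_eq_one _ hs using 1
    ring
  · linear_combination 2 * ha
  · linear_combination -2 * s ^ 2 * n * ha + hs
  · linear_combination 2 * s ^ 4 * n ^ 2 * ha - 2 * s ^ 2 * n * hs

theorem exists_basis_linkingForm_of_odd {m n : ℤ} (hm : Odd m) (hn : Odd n) (j : ℕ) :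
    ∃ v w : ZMod (2 ^ j) × ZMod (2 ^ j), IsUnit (v.1 * w.2 - v.2 * w.1) ∧
      linkingForm (m : ZMod (2 ^ j)) n v v = 2 ∧ linkingForm (m : ZMod (2 ^ j)) n v w = 1 ∧
      linkingForm (m : ZMod (2 ^ j)) n w w = 2 := by
  obtain ⟨a, ha⟩ := Int.exists_two_pow_dvd_quadratic n 1 (m - 1) odd_one
    (by rcases hm with ⟨m', rfl⟩; exact ⟨m', by ring⟩) j
  -- `w = t v + (1 - 2t) s e₂`, where `s` inverts `B(v, e₂) = 1 + 2an`, has `B(v, w) = 1`;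
  -- `B(w, w) = 2` is then the quadratic in `t` solved below.
  obtain ⟨s, hs_odd, hs⟩ :=
    ZMod.exists_odd_intCast_mul_eq_one (u := 1 + 2 * a * n) ⟨a * n, by ring⟩ j
  obtain ⟨t, ht⟩ := Int.exists_two_pow_dvd_quadratic (4 * (n * s ^ 2) - 1) (1 - 4 * (n * s ^ 2))
    (n * s ^ 2 - 1) ⟨-2 * (n * s ^ 2), by ring⟩ ((hn.mul hs_odd.pow).sub_odd odd_one) j
  replace ha := (ZMod.intCast_zmod_eq_zero_iff_dvd _ (2 ^ j)).mpr (by exact_mod_cast ha)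
  replace ht := (ZMod.intCast_zmod_eq_zero_iff_dvd _ (2 ^ j)).mpr (by exact_mod_cast ht)
  have hunit := ZMod.isUnit_intCast_of_odd (u := 1 - 2 * t) ⟨-t, by ring⟩ j
  push_cast at ha hs ht hunit
  refine ⟨(1, a), (t, t * a + (1 - 2 * t) * s), ?_, ?_, ?_, ?_⟩ <;>
    simp only [linkingForm]
  · convert hunit.mul (IsUnit.of_mul_eq_one _ hs) using 1
    ring
  · linear_combination 2 * ha
  · linear_combination 2 * t * ha + (1 - 2 * t) * hs
  · linear_combination 2 * t ^ 2 * ha + 2 * t * (1 - 2 * t) * hs + 2 * ht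

theorem exists_basis_linkingForm_of_even_or_even {m n : ℤ} (h : Even m ∨ Even n) (j : ℕ) :
    ∃ v w : ZMod (2 ^ j) × ZMod (2 ^ j), IsUnit (v.1 * w.2 - v.2 * w.1) ∧
      linkingForm (m : ZMod (2 ^ j)) n v v = 0 ∧ linkingForm (m : ZMod (2 ^ j)) n v w = 1 ∧
      linkingForm (m : ZMod (2 ^ j)) n w w = 0 := by
  rcases h with hm | hn
  · exact exists_basis_linkingForm_of_even n hm j
  · obtain ⟨v, w, hdet, hvv, hvw, hww⟩ := exists_basis_linkingForm_of_even m hn j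
    refine ⟨v.swap, w.swap, ?_, ?_, ?_, ?_⟩
    · simpa [mul_comm] using hdet.neg
    all_goals rwa [linkingForm_swap]

theorem stmt_11_general (j : ℕ) (m n : ℤ)
    (l : (ZMod (2 ^ j) × ZMod (2 ^ j)) →+ (ZMod (2 ^ j) × ZMod (2 ^ j)) →+ AddCircle (1 : ℚ))
    (hsymm : ∀ x y, l x y = l y x)
    (h11 : l (1, 0) (1, 0) = ((2 * (m : ℚ) / 2 ^ j : ℚ) : AddCircle (1 : ℚ)))
    (h12 : l (1, 0) (0, 1) = ((1 / 2 ^ j : ℚ) : AddCircle (1 : ℚ)))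
    (h22 : l (0, 1) (0, 1) = ((2 * (n : ℚ) / 2 ^ j : ℚ) : AddCircle (1 : ℚ))) :
    ((Even m ∨ Even n) →
      ∃ v w : ZMod (2 ^ j) × ZMod (2 ^ j),
        (Function.Bijective fun ab : ZMod (2 ^ j) × ZMod (2 ^ j) => ab.1 • v + ab.2 • w) ∧
        l v v = 0 ∧ l v w = ((1 / 2 ^ j : ℚ) : AddCircle (1 : ℚ)) ∧ l w w = 0) ∧
    ((Odd m ∧ Odd n) →
      ∃ v w : ZMod (2 ^ j) × ZMod (2 ^ j),
        (Function.Bijective fun ab : ZMod (2 ^ j) × ZMod (2 ^ j) => ab.1 • v + ab.2 • w) ∧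
        l v v = ((2 / 2 ^ j : ℚ) : AddCircle (1 : ℚ)) ∧
        l v w = ((1 / 2 ^ j : ℚ) : AddCircle (1 : ℚ)) ∧
        l w w = ((2 / 2 ^ j : ℚ) : AddCircle (1 : ℚ))) := by
  set φ := zmodToRatCircle (2 ^ j)
  have hφ (N : ℤ) : ((N / 2 ^ j : ℚ) : AddCircle (1 : ℚ)) = φ N := by
    rw [zmodToRatCircle_intCast]; push_cast; rfl
  have hl : ∀ u u', l u u' = φ (linkingForm (m : ZMod (2 ^ j)) n u u') := by
    refine l.eq_comp_linkingForm φ ?_ ?_ ?_ ?_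
    · rw [h11]; exact_mod_cast hφ (2 * m)
    · rw [h12]; simpa using hφ 1
    · rw [hsymm, h12]; simpa using hφ 1
    · rw [h22]; exact_mod_cast hφ (2 * n)
  constructor
  · intro h
    obtain ⟨v, w, hdet, hvv, hvw, hww⟩ := exists_basis_linkingForm_of_even_or_even h j
    refine ⟨v, w, Prod.bijective_smul_add_smul hdet, ?_, ?_, ?_⟩ <;> rw [hl]
    · rw [hvv, map_zero]
    · rw [hvw]; simpa using (hφ 1).symm
    · rw [hww, map_zero]
  · rintro ⟨hm, hn⟩
    obtain ⟨v, w, hdet, hvv, hvw, hww⟩ := exists_basis_linkingForm_of_odd hm hn j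
    refine ⟨v, w, Prod.bijective_smul_add_smul hdet, ?_, ?_, ?_⟩ <;> rw [hl]
    · rw [hvv]; simpa using (hφ 2).symm
    · rw [hvw]; simpa using (hφ 1).symm
    · rw [hww]; simpa using (hφ 2).symm

/-- Let `j ≥ 1` and let `l` be the linking form on `H = (ℤ/2^j)²` whose
matrix with respect to the standard basis `e₁ = (1,0)`, `e₂ = (0,1)` is
`(1/2^j)·[[2m, 1], [1, 2n]]`.  If at least one of `m, n` is even, then `(H, l)` is isomorphic to
the form with matrix `(1/2^j)·[[0,1],[1,0]]`; if both are odd, it is isomorphic to the form with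
matrix `(1/2^j)·[[2,1],[1,2]]`.  The isomorphism is expressed by the existence of a new basis
`(v, w)` of `H` on which `l` takes the prescribed values. -/
theorem stmt_11 (j : ℕ) (hj : 1 ≤ j) (m n : ℤ)
    (l : (ZMod (2 ^ j) × ZMod (2 ^ j)) →+ (ZMod (2 ^ j) × ZMod (2 ^ j)) →+ AddCircle (1 : ℚ))
    (hsymm : ∀ x y, l x y = l y x)
    (h11 : l (1, 0) (1, 0) = ((2 * (m : ℚ) / 2 ^ j : ℚ) : AddCircle (1 : ℚ)))
    (h12 : l (1, 0) (0, 1) = ((1 / 2 ^ j : ℚ) : AddCircle (1 : ℚ)))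
    (h22 : l (0, 1) (0, 1) = ((2 * (n : ℚ) / 2 ^ j : ℚ) : AddCircle (1 : ℚ))) :
    ((Even m ∨ Even n) →
      ∃ v w : ZMod (2 ^ j) × ZMod (2 ^ j),
        (Function.Bijective fun ab : ZMod (2 ^ j) × ZMod (2 ^ j) => ab.1 • v + ab.2 • w) ∧
        l v v = 0 ∧ l v w = ((1 / 2 ^ j : ℚ) : AddCircle (1 : ℚ)) ∧ l w w = 0) ∧
    ((Odd m ∧ Odd n) →
      ∃ v w : ZMod (2 ^ j) × ZMod (2 ^ j),
        (Function.Bijective fun ab : ZMod (2 ^ j) × ZMod (2 ^ j) => ab.1 • v + ab.2 • w) ∧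
        l v v = ((2 / 2 ^ j : ℚ) : AddCircle (1 : ℚ)) ∧
        l v w = ((1 / 2 ^ j : ℚ) : AddCircle (1 : ℚ)) ∧
        l w w = ((2 / 2 ^ j : ℚ) : AddCircle (1 : ℚ))) :=
  stmt_11_general j m n l hsymm h11 h12 h22
end

section
/- For n ≥ 2, the linking forms on ℤ/2^{n-1} ⊕ ℤ/2^n ⊕ ℤ/2^n given (with respect to the standard generators, in block-diagonal form) by (1/2^{n-1}) ⊕ (1/2^n)[[0,1],[1,0]] and by (−3/2^{n-1}) ⊕ (1/2^n)[[2,1],[1,2]] are isomorphic as linked groups. An explicit isomorphism sends the standard basis (e_1, e_2, e_3) to (e_1 + 2e_2 − 2e_3, e_1 + e_2, e_1 − e_3). -/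
/-!
The map sends the standard generators to the columns of the integer matrix
`M = [[1, 1, 1], [2, 1, 0], [-2, 0, -1]]`, which is well defined on
`ℤ/p ⊕ ℤ/2p ⊕ ℤ/2p` for every `p`. Since `det M = 3`, its kernel is trivial as soon as `p` is
prime to `3`, so it is bijective on the finite group. It carries one linking form to the other
because the rational Gram matrices `G = (1/p) ⊕ (1/2p)[[0,1],[1,0]]` and
`G' = (-3/p) ⊕ (1/2p)[[2,1],[1,2]]` satisfy `Mᵀ G M = G'` exactly.
-/
namespace ZMod

variable {a b c : ℕ} {G : Type*} [AddCommGroup G]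

theorem prod₃_intCast_eq (i j k : ℤ) :
    ((i, j, k) : ZMod a × ZMod b × ZMod c) = i • (1, 0, 0) + j • (0, 1, 0) + k • (0, 0, 1) := by
  simp [zsmul_eq_mul]

theorem prod₃_addMonoidHom_ext {φ ψ : ZMod a × ZMod b × ZMod c →+ G}
    (h₁ : φ (1, 0, 0) = ψ (1, 0, 0)) (h₂ : φ (0, 1, 0) = ψ (0, 1, 0))
    (h₃ : φ (0, 0, 1) = ψ (0, 0, 1)) : φ = ψ := by
  ext ⟨u, v, w⟩
  obtain ⟨i, rfl⟩ := intCast_surjective u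
  obtain ⟨j, rfl⟩ := intCast_surjective v
  obtain ⟨k, rfl⟩ := intCast_surjective w
  simp only [prod₃_intCast_eq, map_add, map_zsmul, h₁, h₂, h₃]

def liftProd₃ (x y z : G) (hx : (a : ℤ) • x = 0) (hy : (b : ℤ) • y = 0) (hz : (c : ℤ) • z = 0) :
    ZMod a × ZMod b × ZMod c →+ G :=
  (lift a ⟨zmultiplesHom G x, hx⟩).coprod
    ((lift b ⟨zmultiplesHom G y, hy⟩).coprod (lift c ⟨zmultiplesHom G z, hz⟩))

variable (x y z : G) (hx : (a : ℤ) • x = 0) (hy : (b : ℤ) • y = 0) (hz : (c : ℤ) • z = 0)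

theorem liftProd₃_intCast (i j k : ℤ) :
    liftProd₃ x y z hx hy hz (i, j, k) = i • x + j • y + k • z := by
  simp [liftProd₃, lift_coe, add_assoc]

theorem liftProd₃_one_zero_zero : liftProd₃ x y z hx hy hz (1, 0, 0) = x := by
  simpa using liftProd₃_intCast x y z hx hy hz 1 0 0

theorem liftProd₃_zero_one_zero : liftProd₃ x y z hx hy hz (0, 1, 0) = y := by
  simpa using liftProd₃_intCast x y z hx hy hz 0 1 0

theorem liftProd₃_zero_zero_one : liftProd₃ x y z hx hy hz (0, 0, 1) = z := by
  simpa using liftProd₃_intCast x y z hx hy hz 0 0 1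

end ZMod

theorem Int.dvd_of_dvd_relations {p x y z : ℤ} (hp : IsCoprime p 3) (h₁ : p ∣ x + y + z)
    (h₂ : 2 * p ∣ 2 * x + y) (h₃ : 2 * p ∣ 2 * x + z) : p ∣ x ∧ 2 * p ∣ y ∧ 2 * p ∣ z := by
  have h₃x : p ∣ 3 * x := by
    have h := dvd_sub (dvd_add (dvd_of_mul_left_dvd h₂) (dvd_of_mul_left_dvd h₃)) h₁
    rwa [show 2 * x + y + (2 * x + z) - (x + y + z) = 3 * x by ring] at h
  have hx : p ∣ x := hp.dvd_of_dvd_mul_left h₃x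
  have h₂x : 2 * p ∣ 2 * x := mul_dvd_mul_left 2 hx
  refine ⟨hx, ?_, ?_⟩
  · simpa using dvd_sub h₂ h₂x
  · simpa using dvd_sub h₃ h₂x

variable {p q : ℕ}

theorem natCast_eq_zero_of_eq_two_mul (hq : q = 2 * p) : (q : ZMod p) = 0 :=
  (ZMod.natCast_eq_zero_iff q p).2 (hq ▸ dvd_mul_left p 2)

theorem two_mul_natCast_eq_zero (hq : q = 2 * p) : (2 * p : ZMod q) = 0 := by
  subst hq
  exact_mod_cast ZMod.natCast_self (2 * p)

def basisChange (hq : q = 2 * p) : ZMod p × ZMod q × ZMod q →+ ZMod p × ZMod q × ZMod q :=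
  ZMod.liftProd₃ (1, 2, -2) (1, 1, 0) (1, 0, -1)
    (by simp [mul_comm _ (2 : ZMod q), two_mul_natCast_eq_zero hq])
    (by simp [natCast_eq_zero_of_eq_two_mul hq]) (by simp [natCast_eq_zero_of_eq_two_mul hq])

theorem basisChange_intCast (hq : q = 2 * p) (i j k : ℤ) :
    basisChange hq (i, j, k) = (((i + j + k : ℤ) : ZMod p), ((2 * i + j : ℤ) : ZMod q),
      ((-(2 * i + k) : ℤ) : ZMod q)) := by
  rw [basisChange, ZMod.liftProd₃_intCast]
  ext <;> simp [zsmul_eq_mul] <;> ring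

theorem basisChange_injective (hq : q = 2 * p) (hp : p.Coprime 3) :
    Function.Injective (basisChange hq) := by
  refine (injective_iff_map_eq_zero _).2 ?_
  rintro ⟨u, v, w⟩ h
  obtain ⟨i, rfl⟩ := ZMod.intCast_surjective u
  obtain ⟨j, rfl⟩ := ZMod.intCast_surjective v
  obtain ⟨k, rfl⟩ := ZMod.intCast_surjective w
  rw [basisChange_intCast] at h
  simp only [Prod.mk_eq_zero, ZMod.intCast_zmod_eq_zero_iff_dvd, hq, Nat.cast_mul,
    Nat.cast_ofNat, dvd_neg] at h ⊢
  exact Int.dvd_of_dvd_relations (Nat.isCoprime_iff_coprime.2 hp) h.1 h.2.1 h.2.2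

theorem basisChange_bijective [NeZero p] (hq : q = 2 * p) (hp : p.Coprime 3) :
    Function.Bijective (basisChange hq) := by
  have : NeZero q := ⟨by simp [hq, NeZero.ne p]⟩
  exact Finite.injective_iff_bijective.1 (basisChange_injective hq hp)

theorem basisChange_one_zero_zero (hq : q = 2 * p) : basisChange hq (1, 0, 0) = (1, 2, -2) :=
  ZMod.liftProd₃_one_zero_zero ..

theorem basisChange_zero_one_zero (hq : q = 2 * p) : basisChange hq (0, 1, 0) = (1, 1, 0) :=
  ZMod.liftProd₃_zero_one_zero ..

theorem basisChange_zero_zero_one (hq : q = 2 * p) : basisChange hq (0, 0, 1) = (1, 0, -1) :=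
  ZMod.liftProd₃_zero_zero_one ..

theorem basisChange_isometry (hq : q = 2 * p)
    (l l' : ZMod p × ZMod q × ZMod q →+ ZMod p × ZMod q × ZMod q →+ AddCircle (1 : ℚ))
    (hsymm : ∀ x y, l x y = l y x) (hsymm' : ∀ x y, l' x y = l' y x)
    (h₁ : l (1, 0, 0) (1, 0, 0) = ((1 / p : ℚ) : AddCircle (1 : ℚ)))
    (h₂ : l (1, 0, 0) (0, 1, 0) = 0) (h₃ : l (1, 0, 0) (0, 0, 1) = 0)
    (h₄ : l (0, 1, 0) (0, 1, 0) = 0)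
    (h₅ : l (0, 1, 0) (0, 0, 1) = ((1 / q : ℚ) : AddCircle (1 : ℚ)))
    (h₆ : l (0, 0, 1) (0, 0, 1) = 0)
    (h₁' : l' (1, 0, 0) (1, 0, 0) = ((-3 / p : ℚ) : AddCircle (1 : ℚ)))
    (h₂' : l' (1, 0, 0) (0, 1, 0) = 0) (h₃' : l' (1, 0, 0) (0, 0, 1) = 0)
    (h₄' : l' (0, 1, 0) (0, 1, 0) = ((2 / q : ℚ) : AddCircle (1 : ℚ)))
    (h₅' : l' (0, 1, 0) (0, 0, 1) = ((1 / q : ℚ) : AddCircle (1 : ℚ)))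
    (h₆' : l' (0, 0, 1) (0, 0, 1) = ((2 / q : ℚ) : AddCircle (1 : ℚ)))
    (x y : ZMod p × ZMod q × ZMod q) :
    l (basisChange hq x) (basisChange hq y) = l' x y := by
  suffices (l.compl₂ (basisChange hq)).comp (basisChange hq) = l' by rw [← this]; rfl
  have hq' : (q : ℚ) = 2 * p := by exact_mod_cast hq
  have e₁ : basisChange hq (1, 0, 0) = (1, 0, 0) + (2 : ℤ) • (0, 1, 0) + (-2 : ℤ) • (0, 0, 1) := by
    rw [basisChange_one_zero_zero]; ext <;> simp
  have e₂ : basisChange hq (0, 1, 0) = (1, 0, 0) + (0, 1, 0) := by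
    rw [basisChange_zero_one_zero]; ext <;> simp
  have e₃ : basisChange hq (0, 0, 1) = (1, 0, 0) + (-1 : ℤ) • (0, 0, 1) := by
    rw [basisChange_zero_zero_one]; ext <;> simp
  refine ZMod.prod₃_addMonoidHom_ext (ZMod.prod₃_addMonoidHom_ext ?_ ?_ ?_)
    (ZMod.prod₃_addMonoidHom_ext ?_ ?_ ?_) (ZMod.prod₃_addMonoidHom_ext ?_ ?_ ?_)
  all_goals
    simp only [AddMonoidHom.comp_apply, AddMonoidHom.compl₂_apply, e₁, e₂, e₃, map_add,
      map_zsmul, AddMonoidHom.add_apply, AddMonoidHom.smul_apply, h₁, h₂, h₃, h₄, h₅, h₆,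
      hsymm (0, 1, 0) (1, 0, 0), hsymm (0, 0, 1) (1, 0, 0), hsymm (0, 0, 1) (0, 1, 0),
      h₁', h₂', h₃', h₄', h₅', h₆', hsymm' (0, 1, 0) (1, 0, 0), hsymm' (0, 0, 1) (1, 0, 0),
      hsymm' (0, 0, 1) (0, 1, 0), smul_zero, add_zero, zero_add, ← AddCircle.coe_zsmul,
      ← AddCircle.coe_add]
    refine congrArg ((↑) : ℚ → AddCircle (1 : ℚ)) ?_
    rw [hq']
    push_cast [zsmul_eq_mul]
    ring

/-- For `n ≥ 2`, the linking forms on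
`H = ℤ/2^(n-1) ⊕ ℤ/2^n ⊕ ℤ/2^n` given in block-diagonal form (with respect to the standard
basis `e₁, e₂, e₃`) by `(1/2^(n-1)) ⊕ (1/2^n)[[0,1],[1,0]]` and by
`(-3/2^(n-1)) ⊕ (1/2^n)[[2,1],[1,2]]` are isomorphic as linked groups; an explicit isomorphism
sends `(e₁, e₂, e₃)` to `(e₁ + 2e₂ - 2e₃, e₁ + e₂, e₁ - e₃)`. -/
theorem stmt_12 (n : ℕ) (hn : 2 ≤ n)
    (l l' : (ZMod (2 ^ (n - 1)) × ZMod (2 ^ n) × ZMod (2 ^ n)) →+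
      (ZMod (2 ^ (n - 1)) × ZMod (2 ^ n) × ZMod (2 ^ n)) →+ AddCircle (1 : ℚ))
    (hsymm : ∀ x y, l x y = l y x) (hsymm' : ∀ x y, l' x y = l' y x)
    (h1 : l (1, 0, 0) (1, 0, 0) = ((1 / 2 ^ (n - 1) : ℚ) : AddCircle (1 : ℚ)))
    (h2 : l (1, 0, 0) (0, 1, 0) = 0)
    (h3 : l (1, 0, 0) (0, 0, 1) = 0)
    (h4 : l (0, 1, 0) (0, 1, 0) = 0)
    (h5 : l (0, 1, 0) (0, 0, 1) = ((1 / 2 ^ n : ℚ) : AddCircle (1 : ℚ)))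
    (h6 : l (0, 0, 1) (0, 0, 1) = 0)
    (h1' : l' (1, 0, 0) (1, 0, 0) = ((-3 / 2 ^ (n - 1) : ℚ) : AddCircle (1 : ℚ)))
    (h2' : l' (1, 0, 0) (0, 1, 0) = 0)
    (h3' : l' (1, 0, 0) (0, 0, 1) = 0)
    (h4' : l' (0, 1, 0) (0, 1, 0) = ((2 / 2 ^ n : ℚ) : AddCircle (1 : ℚ)))
    (h5' : l' (0, 1, 0) (0, 0, 1) = ((1 / 2 ^ n : ℚ) : AddCircle (1 : ℚ)))
    (h6' : l' (0, 0, 1) (0, 0, 1) = ((2 / 2 ^ n : ℚ) : AddCircle (1 : ℚ))) :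
    ∃ f : (ZMod (2 ^ (n - 1)) × ZMod (2 ^ n) × ZMod (2 ^ n)) ≃+
        (ZMod (2 ^ (n - 1)) × ZMod (2 ^ n) × ZMod (2 ^ n)),
      (∀ x y, l (f x) (f y) = l' x y) ∧
      f (1, 0, 0) = (1, 2, -2) ∧ f (0, 1, 0) = (1, 1, 0) ∧ f (0, 0, 1) = (1, 0, -1) := by
  obtain ⟨m, rfl⟩ : ∃ m, n = m + 1 := ⟨n - 1, by omega⟩
  have hq : 2 ^ (m + 1) = 2 * 2 ^ m := pow_succ' 2 m
  have hp : (2 ^ m).Coprime 3 := Nat.Coprime.pow_left m (by decide)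
  simp only [Nat.add_sub_cancel] at h1 h1'
  refine ⟨AddEquiv.ofBijective _ (basisChange_bijective hq hp), basisChange_isometry hq l l' hsymm
    hsymm' (by exact_mod_cast h1) h2 h3 h4 (by exact_mod_cast h5) h6 (by exact_mod_cast h1') h2'
    h3' (by exact_mod_cast h4') (by exact_mod_cast h5') (by exact_mod_cast h6'),
    basisChange_one_zero_zero hq, basisChange_zero_one_zero hq, basisChange_zero_zero_one hq⟩
end

section
/- Let N be a finitely generated nilpotent group and ψ : N → N an endomorphism. Then ψ is an automorphism if and only if the induced endomorphism ψ_* of the abelianization N^{ab} = N/[N,N] is an automorphism. -/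
/-!
If `ψ_*` is onto, then `ψ(N)` and `[N, N]` together generate `N`; in a nilpotent group this
forces `ψ(N) = N`, by induction on the nilpotency class through `N / Z(N)`.

Injectivity is the Hopf property. A finitely generated nilpotent group satisfies the ascending
chain condition on subgroups, since each `γₙ / γₙ₊₁` is a finitely generated abelian group
(generated by the commutators of generators of `γₙ₋₁ / γₙ` with generators of `N`). In a
noetherian order an injective monotone map `Φ` fixes every `a ≤ Φ a`; for `Φ = ψ⁻¹(·)` and
`a = ⊥` this says `ker ψ = ⊥`.
-/

open Function
open scoped commutatorElement

variable {G : Type*} [Group G]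

section Surjectivity

theorem commutatorElement_mul_mem_center_mul_mem_center {z₁ z₂ : G}
    (hz₁ : z₁ ∈ Subgroup.center G) (hz₂ : z₂ ∈ Subgroup.center G) (a b : G) :
    ⁅a * z₁, b * z₂⁆ = ⁅a, b⁆ := by
  have h₁ := Subgroup.mem_center_iff.mp hz₁
  have h₂ := Subgroup.mem_center_iff.mp hz₂
  rw [commutatorElement_def, commutatorElement_def]
  calc _ = a * (z₁ * (b * z₂)) * z₁⁻¹ * a⁻¹ * z₂⁻¹ * b⁻¹ := by group
    _ = a * b * (z₂ * a⁻¹) * z₂⁻¹ * b⁻¹ := by rw [← h₁ (b * z₂)]; group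
    _ = a * b * a⁻¹ * b⁻¹ := by rw [← h₂ a⁻¹]; group

theorem Subgroup.commutator_le_of_sup_center_eq_top {H : Subgroup G} (h : H ⊔ center G = ⊤) :
    _root_.commutator G ≤ H := by
  rw [_root_.commutator_def, commutator_le]
  intro g₁ _ g₂ _
  obtain ⟨h₁, hh₁, z₁, hz₁, rfl⟩ := mem_sup_of_normal_right.mp (h ▸ mem_top g₁)
  obtain ⟨h₂, hh₂, z₂, hz₂, rfl⟩ := mem_sup_of_normal_right.mp (h ▸ mem_top g₂)
  rw [commutatorElement_mul_mem_center_mul_mem_center hz₁ hz₂]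
  exact commutator_le_self H (commutator_mem_commutator hh₁ hh₂)

theorem Subgroup.eq_top_of_sup_commutator_eq_top [Group.IsNilpotent G] {H : Subgroup G}
    (h : H ⊔ _root_.commutator G = ⊤) : H = ⊤ := by
  refine Group.nilpotent_center_quotient_ind
    (P := fun G _ _ => ∀ H : Subgroup G, H ⊔ _root_.commutator G = ⊤ → H = ⊤) G ?_ ?_ H h
  · intro G _ _ H _
    exact Subsingleton.elim _ _
  · intro G _ _ ih H h
    let mk := QuotientGroup.mk' (center G)
    have hmk := QuotientGroup.mk'_surjective (center G)
    have hmap : H.map mk = ⊤ := by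
      refine ih _ ?_
      rw [_root_.commutator_def, ← map_top_of_surjective mk hmk, ← map_commutator,
        ← _root_.commutator_def, ← Subgroup.map_sup, h, map_top_of_surjective mk hmk]
    have hcenter : H ⊔ center G = ⊤ := by
      simpa [mk, comap_map_eq] using congrArg (comap mk) hmap
    rw [← h, sup_eq_left.mpr (H.commutator_le_of_sup_center_eq_top hcenter)]

theorem surjective_of_surjective_abelianization_map {H : Type*} [Group H] [Group.IsNilpotent G]
    {f : H →* G} (hf : Surjective (Abelianization.map f)) : Surjective f := by
  rw [← MonoidHom.range_eq_top]
  refine Subgroup.eq_top_of_sup_commutator_eq_top ?_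
  have hrange : f.range.map Abelianization.of = ⊤ := by
    have hcomp : Abelianization.of.comp f = (Abelianization.map f).comp Abelianization.of := rfl
    have hof : Surjective (Abelianization.of (G := H)) := QuotientGroup.mk'_surjective _
    rw [← MonoidHom.range_comp, hcomp, MonoidHom.range_comp, MonoidHom.range_eq_top.mpr hof,
      ← MonoidHom.range_eq_map, MonoidHom.range_eq_top.mpr hf]
  simpa [Subgroup.comap_map_eq, Abelianization.ker_of] using
    congrArg (Subgroup.comap Abelianization.of) hrange

end Surjectivity

section Noetherian

open Subgroup

theorem wellFoundedGT_subgroup_of_commGroup (A : Type*) [CommGroup A] [Group.FG A] :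
    WellFoundedGT (Subgroup A) := by
  have : Module.Finite ℤ (Additive A) := Module.Finite.iff_addGroup_fg.mpr inferInstance
  exact (Subgroup.toAddSubgroup.trans AddSubgroup.toIntSubmodule).strictMono.wellFoundedGT

theorem Subgroup.eq_of_le_of_inf_le_of_le_sup {N H K : Subgroup G} [N.Normal] (hHK : H ≤ K)
    (hinf : K ⊓ N ≤ H) (hsup : K ≤ H ⊔ N) : H = K := by
  refine le_antisymm hHK fun k hk => ?_
  obtain ⟨h, hh, n, hn, rfl⟩ := mem_sup_of_normal_right.mp (hsup hk)
  have hnK : n ∈ K := by simpa using K.mul_mem (K.inv_mem (hHK hh)) hk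
  exact H.mul_mem hh (hinf ⟨hnK, hn⟩)

theorem wellFoundedGT_subgroup_of_normal (N : Subgroup G) [N.Normal]
    [WellFoundedGT (Subgroup N)] [WellFoundedGT (Subgroup (G ⧸ N))] :
    WellFoundedGT (Subgroup G) := by
  refine StrictMono.wellFoundedGT
    (f := fun H : Subgroup G => (H.subgroupOf N, H.map (QuotientGroup.mk' N))) fun H K hHK => ?_
  refine lt_of_le_of_ne ⟨subgroupOf_mono N hHK.le, map_mono hHK.le⟩ fun heq => hHK.ne ?_
  obtain ⟨hinf, hmap⟩ := Prod.ext_iff.mp heq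
  rw [subgroupOf_inj] at hinf
  have hsup := congrArg (comap (QuotientGroup.mk' N)) hmap
  simp only [comap_map_eq, QuotientGroup.ker_mk'] at hsup
  exact eq_of_le_of_inf_le_of_le_sup (N := N) hHK.le (hinf.ge.trans inf_le_left)
    (hsup ▸ le_sup_left)

theorem Subgroup.normal_of_commutator_top_le {L : Subgroup G} (h : ⁅L, ⊤⁆ ≤ L) : L.Normal where
  conj_mem x hx g := by
    have hc : ⁅g, x⁆ ∈ L := h (commutator_comm L ⊤ ▸ commutator_mem_commutator (mem_top g) hx)
    simpa [commutatorElement_def] using L.mul_mem hc hx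

theorem Subgroup.commutator_top_le_iff_map_le_center {A L : Subgroup G} [L.Normal] :
    ⁅A, ⊤⁆ ≤ L ↔ A.map (QuotientGroup.mk' L) ≤ center (G ⧸ L) := by
  rw [← commutator_top_right_eq_bot_iff_le_center,
    ← map_top_of_surjective _ (QuotientGroup.mk'_surjective L), ← map_commutator,
    map_eq_bot_iff, QuotientGroup.ker_mk']

theorem closure_image2_commutator_sup_lowerCentralSeries_eq {S T : Set G} (hT : closure T = ⊤)
    {n : ℕ} (hS : closure S ⊔ (⊤ : Subgroup G).lowerCentralSeries (n + 1) =
      (⊤ : Subgroup G).lowerCentralSeries n) :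
    closure (Set.image2 (⁅·, ·⁆) S T) ⊔ (⊤ : Subgroup G).lowerCentralSeries (n + 2) =
      (⊤ : Subgroup G).lowerCentralSeries (n + 1) := by
  set L := closure (Set.image2 (⁅·, ·⁆) S T) ⊔ (⊤ : Subgroup G).lowerCentralSeries (n + 2)
  have hSn : S ⊆ (⊤ : Subgroup G).lowerCentralSeries n :=
    subset_closure.trans (hS ▸ le_sup_left : closure S ≤ _)
  have hL : L ≤ (⊤ : Subgroup G).lowerCentralSeries (n + 1) := by
    refine sup_le ((closure_le _).mpr ?_) (Subgroup.lowerCentralSeries_antitone ⊤ (n + 1).le_succ)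
    rintro _ ⟨s, hs, t, -, rfl⟩
    exact commutator_mem_commutator (hSn hs) (mem_top t)
  have : L.Normal := normal_of_commutator_top_le ((commutator_mono hL le_rfl).trans le_sup_right)
  refine le_antisymm hL ?_
  -- modulo `L`, both `S` and `γₙ₊₁` become central, hence so does `γₙ`
  rw [Subgroup.lowerCentralSeries_succ, commutator_top_le_iff_map_le_center, ← hS,
    Subgroup.map_sup]
  refine sup_le ?_ (commutator_top_le_iff_map_le_center.mp le_sup_right)
  have hT' : closure (QuotientGroup.mk' L '' T) = ⊤ := by
    rw [← MonoidHom.map_closure, hT, map_top_of_surjective _ (QuotientGroup.mk'_surjective L)]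
  rw [MonoidHom.map_closure, closure_le, ← centralizer_univ, ← coe_top, ← hT',
    centralizer_closure]
  rintro _ ⟨s, hs, rfl⟩
  rw [SetLike.mem_coe, mem_centralizer_iff]
  rintro _ ⟨t, ht, rfl⟩
  have hst : QuotientGroup.mk' L ⁅s, t⁆ = 1 :=
    (QuotientGroup.eq_one_iff _).mpr (mem_sup_left (subset_closure ⟨s, hs, t, ht, rfl⟩))
  rw [map_commutatorElement, commutatorElement_eq_one_iff_mul_comm] at hst
  exact hst.symm

theorem exists_finite_closure_sup_lowerCentralSeries_succ_eq [Group.FG G] (n : ℕ) :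
    ∃ S : Set G, S.Finite ∧ closure S ⊔ (⊤ : Subgroup G).lowerCentralSeries (n + 1) =
      (⊤ : Subgroup G).lowerCentralSeries n := by
  obtain ⟨T, hT, hTfin⟩ := Group.fg_iff.mp ‹_›
  induction n with
  | zero => exact ⟨T, hTfin, by simp [hT]⟩
  | succ n ih =>
    obtain ⟨S, hSfin, hS⟩ := ih
    exact ⟨_, hSfin.image2 _ hTfin, closure_image2_commutator_sup_lowerCentralSeries_eq hT hS⟩

instance Group.wellFoundedGT_subgroup_of_isNilpotent [Group.FG G] [Group.IsNilpotent G] :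
    WellFoundedGT (Subgroup G) := by
  obtain ⟨c, hc⟩ : ∃ c, Group.nilpotencyClass G ≤ c := ⟨_, le_rfl⟩
  induction c generalizing G with
  | zero =>
    have := nilpotencyClass_zero_iff_subsingleton.mp (Nat.le_zero.mp hc)
    infer_instance
  | succ c ih =>
    set K := (⊤ : Subgroup G).lowerCentralSeries c
    have hbot := Subgroup.lowerCentralSeries_eq_bot_iff_nilpotencyClass_le.mpr hc
    have hK : K ≤ center G := by
      rwa [← commutator_top_right_eq_bot_iff_le_center, ← Subgroup.lowerCentralSeries_succ]
    let _ : CommGroup K :=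
      { mul_comm a b := Subtype.ext (mem_center_iff.mp (hK a.2) b).symm }
    have : Group.FG K := by
      obtain ⟨S, hSfin, hS⟩ := exists_finite_closure_sup_lowerCentralSeries_succ_eq (G := G) c
      rw [hbot, sup_bot_eq] at hS
      exact (Group.fg_iff_subgroup_fg K).mpr ((Subgroup.fg_iff K).mpr ⟨S, hS, hSfin⟩)
    have := wellFoundedGT_subgroup_of_commGroup K
    have : Group.FG (G ⧸ K) := Group.fg_of_surjective (QuotientGroup.mk'_surjective K)
    have := ih (G := G ⧸ K) <| by
      rw [← Subgroup.lowerCentralSeries_eq_bot_iff_nilpotencyClass_le,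
        ← map_top_of_surjective _ (QuotientGroup.mk'_surjective K),
        ← Subgroup.map_lowerCentralSeries, Subgroup.map_eq_bot_iff, QuotientGroup.ker_mk']
    exact wellFoundedGT_subgroup_of_normal K

end Noetherian

theorem WellFoundedGT.map_eq_of_le_map {α : Type*} [PartialOrder α] [WellFoundedGT α]
    {Φ : α → α} (hmono : Monotone Φ) (hinj : Injective Φ) {a : α} (ha : a ≤ Φ a) : Φ a = a := by
  have hchain : Monotone fun n => Φ^[n] a := monotone_nat_of_le_succ fun n => by
    rw [iterate_succ_apply]; exact hmono.iterate n ha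
  obtain ⟨n, hn⟩ := WellFoundedGT.monotone_chain_condition ⟨_, hchain⟩
  have := hn (n + 1) n.le_succ
  exact (hinj.iterate n (by simpa [iterate_succ_apply] using this)).symm

theorem injective_of_surjective_of_wellFoundedGT [WellFoundedGT (Subgroup G)] {f : G →* G}
    (hf : Surjective f) : Injective f := by
  rw [← MonoidHom.ker_eq_bot_iff, ← MonoidHom.comap_bot]
  exact WellFoundedGT.map_eq_of_le_map (fun _ _ => Subgroup.comap_mono)
    (Subgroup.comap_injective hf) bot_le

/-- Let `N` be a finitely generated nilpotent group and `ψ : N → N` an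
endomorphism.  Then `ψ` is an automorphism (bijective) if and only if the induced endomorphism
`ψ_*` of the abelianization `N^{ab} = N/[N,N]` is an automorphism. -/
theorem stmt_18 (N : Type) [Group N] [Group.FG N] [Group.IsNilpotent N] (ψ : N →* N) :
    Function.Bijective ψ ↔ Function.Bijective (Abelianization.map ψ) := by
  refine ⟨fun h => (MulEquiv.ofBijective ψ h).abelianizationCongr.bijective, fun h => ?_⟩
  have hsurj : Surjective ψ := surjective_of_surjective_abelianization_map h.2
  exact ⟨injective_of_surjective_of_wellFoundedGT hsurj, hsurj⟩
end

section
/- Let N₁ be a finitely generated free nilpotent group, N₂ a finitely generated nilpotent group, π : N₁ → N₂ a surjective homomorphism, and φ an automorphism of N₂. Then φ lifts to an automorphism φ̃ of N₁ (i.e. π ∘ φ̃ = φ ∘ π) if and only if the induced automorphism φ_* of N₂^{ab} lifts to an automorphism of N₁^{ab} along the induced surjection N₁^{ab} → N₂^{ab}. -/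
/-!
A lift `φ̃` induces a lift `φ̃_*` on abelianizations. Conversely, given `ψ`, freeness lets us send
each generator `xᵢ` of `N₁` anywhere, so we may choose `θ(xᵢ)` lifting both `φ(π xᵢ)` and
`ψ(xᵢ)`; this is possible because `π` maps `[N₁, N₁]` onto `[N₂, N₂]`.

It remains to see that `θ` is bijective. Lifting `ψ⁻¹` in the same way to `θ'`, both `θ θ'` and
`θ' θ` induce the identity on `N₁^{ab}`. Write `γ₁ = G ≥ γ₂ ≥ ⋯` for the lower central series.
An endomorphism `α` of a nilpotent group that is the identity modulo `γ₂` is the identity on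
every layer `γₙ / γₙ₊₁`: by induction, since `γₙ₊₁` is generated by commutators `⁅x, y⁆` with
`x ∈ γₙ`, and `⁅α x, α y⁆ ≡ ⁅x, y⁆` modulo `γₙ₊₂` because `⁅γₙ, γ₂⁆ ≤ γₙ₊₂` by the three
subgroups lemma. Going down the lower central series, which reaches `1`, shows that `α` is
injective and surjective.
-/

/-- The free nilpotent group of class `c` on `k` generators: the quotient of the free group on
`k` generators by the `(c+1)`-st term of its lower central series (with Mathlib's indexing,
`lowerCentralSeries G 0 = G`, so the `(c+1)`-st term is `lowerCentralSeries G c`). -/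
def FreeNilpotentGroup (k c : ℕ) : Type :=
  FreeGroup (Fin k) ⧸ (⊤ : Subgroup (FreeGroup (Fin k))).lowerCentralSeries c

noncomputable instance (k c : ℕ) : Group (FreeNilpotentGroup k c) :=
  QuotientGroup.Quotient.group _

open scoped commutatorElement

namespace Subgroup

variable {G : Type*} [Group G]

theorem commutator_commutator_le_of_rotate {H₁ H₂ H₃ N : Subgroup G} [N.Normal]
    (h₁ : ⁅⁅H₂, H₃⁆, H₁⁆ ≤ N) (h₂ : ⁅⁅H₃, H₁⁆, H₂⁆ ≤ N) : ⁅⁅H₁, H₂⁆, H₃⁆ ≤ N := by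
  simp only [← QuotientGroup.ker_mk' N, ← map_eq_bot_iff, map_commutator] at *
  exact commutator_commutator_eq_bot_of_rotate h₁ h₂

theorem commutator_lowerCentralSeries_le (i j : ℕ) :
    ⁅(⊤ : Subgroup G).lowerCentralSeries i, (⊤ : Subgroup G).lowerCentralSeries j⁆ ≤
      (⊤ : Subgroup G).lowerCentralSeries (i + j + 1) := by
  induction j generalizing i with
  | zero => rw [add_zero, lowerCentralSeries_zero, lowerCentralSeries_succ]
  | succ j ih =>
    rw [commutator_comm, lowerCentralSeries_succ, show i + (j + 1) + 1 = i + j + 1 + 1 by ring,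
      lowerCentralSeries_succ]
    apply commutator_commutator_le_of_rotate
    · rw [commutator_comm ⊤, ← lowerCentralSeries_succ, ← lowerCentralSeries_succ, add_right_comm i]
      exact ih (i + 1)
    · exact commutator_mono (ih i) le_rfl

end Subgroup

namespace QuotientGroup

variable {G : Type*} [Group G]

theorem mk_commutatorElement_mul_mul {N : Subgroup G} [N.Normal] {x y u v : G}
    (hu : ⁅u, y * v⁆ ∈ N) (hv : ⁅x, v⁆ ∈ N) : ((⁅x * u, y * v⁆ : G) : G ⧸ N) = (⁅x, y⁆ : G) := by
  rw [commutatorElement_mul_left_eq_conj_mul x u, commutatorElement_mul_right_eq_mul_conj x y v]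
  simp only [mk_mul, mk_inv, (eq_one_iff _).mpr hu, (eq_one_iff _).mpr hv]
  group

end QuotientGroup

namespace MonoidHom

variable {G : Type*} [Group G]

theorem mk_apply_eq_mk_of_abelianization_map_eq_id {α : G →* G}
    (hα : Abelianization.map α = MonoidHom.id _) {n : ℕ} {x : G}
    (hx : x ∈ (⊤ : Subgroup G).lowerCentralSeries n) :
    (α x : G ⧸ (⊤ : Subgroup G).lowerCentralSeries (n + 1)) = x := by
  have base (y : G) : (α y : G ⧸ (⊤ : Subgroup G).lowerCentralSeries 1) = y := by
    rw [Subgroup.top_lowerCentralSeries_one]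
    exact congr($hα (Abelianization.of y))
  induction n generalizing x with
  | zero => exact base x
  | succ n ih =>
    suffices (⊤ : Subgroup G).lowerCentralSeries (n + 1) ≤
        ((QuotientGroup.mk' _).comp α).eqLocus (QuotientGroup.mk' _) from this hx
    rw [Subgroup.lowerCentralSeries_succ, Subgroup.commutator_le]
    rintro x hx y -
    have hu : x⁻¹ * α x ∈ (⊤ : Subgroup G).lowerCentralSeries (n + 1) :=
      QuotientGroup.eq.mp (ih hx).symm
    have hv : y⁻¹ * α y ∈ (⊤ : Subgroup G).lowerCentralSeries 1 := QuotientGroup.eq.mp (base y).symm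
    change ((α ⁅x, y⁆ : G) : G ⧸ (⊤ : Subgroup G).lowerCentralSeries (n + 2)) = (⁅x, y⁆ : G)
    rw [map_commutatorElement, ← mul_inv_cancel_left x (α x), ← mul_inv_cancel_left y (α y)]
    exact QuotientGroup.mk_commutatorElement_mul_mul
      (Subgroup.commutator_mem_commutator hu (Subgroup.mem_top _))
      (Subgroup.commutator_lowerCentralSeries_le n 1 (Subgroup.commutator_mem_commutator hx hv))

variable [Group.IsNilpotent G] {α : G →* G}

theorem injective_of_abelianization_map_eq_id (hα : Abelianization.map α = MonoidHom.id _) :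
    Function.Injective α := by
  rw [injective_iff_map_eq_one]
  intro x hx
  have mem (n : ℕ) : x ∈ (⊤ : Subgroup G).lowerCentralSeries n := by
    induction n with
    | zero => exact Subgroup.mem_top x
    | succ n ih =>
      rw [← QuotientGroup.eq_one_iff, ← mk_apply_eq_mk_of_abelianization_map_eq_id hα ih, hx,
        QuotientGroup.mk_one]
  obtain ⟨c, hc⟩ := Subgroup.nilpotent_iff_lowerCentralSeries.mp ‹_›
  simpa [hc] using mem c

theorem surjective_of_abelianization_map_eq_id (hα : Abelianization.map α = MonoidHom.id _) :
    Function.Surjective α := by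
  obtain ⟨c, hc⟩ := Subgroup.nilpotent_iff_lowerCentralSeries.mp ‹_›
  suffices ∀ m n, c ≤ n + m → (⊤ : Subgroup G).lowerCentralSeries n ≤ α.range from
    range_eq_top.mp (top_le_iff.mp (this c 0 (by rw [zero_add])))
  intro m
  induction m with
  | zero =>
    intro n hn
    exact (Subgroup.lowerCentralSeries_antitone ⊤ hn).trans (hc ▸ bot_le)
  | succ m ih =>
    intro n hn x hx
    have h : (α x)⁻¹ * x ∈ α.range :=
      ih (n + 1) (by omega) (QuotientGroup.eq.mp (mk_apply_eq_mk_of_abelianization_map_eq_id hα hx))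
    simpa using α.range.mul_mem ⟨x, rfl⟩ h

end MonoidHom

namespace Abelianization

variable {G H : Type*} [Group G] [Group H]

theorem of_surjective : Function.Surjective (of : G →* Abelianization G) :=
  QuotientGroup.mk_surjective

theorem exists_apply_eq_and_of_eq {π : G →* H} (hπ : Function.Surjective π) {a : H}
    {b : Abelianization G} (h : map π b = of a) : ∃ g, π g = a ∧ of g = b := by
  obtain ⟨g₀, rfl⟩ := of_surjective b
  have hker : (π g₀)⁻¹ * a ∈ commutator H := by
    rw [← ker_of, MonoidHom.mem_ker, map_mul, map_inv, ← h, map_of, inv_mul_cancel]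
  rw [commutator_def, ← MonoidHom.range_eq_top.mpr hπ, ← map_commutator_eq] at hker
  obtain ⟨z, hz, hπz⟩ := hker
  refine ⟨g₀ * z, by rw [map_mul, hπz, mul_inv_cancel_left], ?_⟩
  rw [map_mul, MonoidHom.mem_ker.mp ((ker_of (G := G)).ge hz), mul_one]

end Abelianization

namespace FreeNilpotentGroup

variable {k c : ℕ}

noncomputable def mk : FreeGroup (Fin k) →* FreeNilpotentGroup k c :=
  QuotientGroup.mk' _

noncomputable def of (i : Fin k) : FreeNilpotentGroup k c :=
  mk (FreeGroup.of i)

theorem mk_surjective : Function.Surjective (mk : FreeGroup (Fin k) →* FreeNilpotentGroup k c) :=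
  QuotientGroup.mk'_surjective _

theorem lowerCentralSeries_eq_bot :
    (⊤ : Subgroup (FreeNilpotentGroup k c)).lowerCentralSeries c = ⊥ := by
  rw [← Subgroup.map_top_of_surjective mk mk_surjective, ← Subgroup.map_lowerCentralSeries,
    Subgroup.map_eq_bot_iff]
  exact (QuotientGroup.ker_mk' _).ge

instance : Group.IsNilpotent (FreeNilpotentGroup k c) :=
  Subgroup.nilpotent_iff_lowerCentralSeries.mpr ⟨c, lowerCentralSeries_eq_bot⟩

variable {H : Type*} [Group H]

noncomputable def lift (hH : (⊤ : Subgroup H).lowerCentralSeries c = ⊥) (g : Fin k → H) :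
    FreeNilpotentGroup k c →* H :=
  QuotientGroup.lift _ (FreeGroup.lift g) <| by
    rw [← Subgroup.map_eq_bot_iff, Subgroup.map_lowerCentralSeries, eq_bot_iff, ← hH]
    exact Subgroup.lowerCentralSeries_mono c le_top

@[simp]
theorem lift_of (hH : (⊤ : Subgroup H).lowerCentralSeries c = ⊥) (g : Fin k → H) (i : Fin k) :
    lift hH g (of i) = g i :=
  FreeGroup.lift_apply_of

theorem hom_ext {f₁ f₂ : FreeNilpotentGroup k c →* H} (h : ∀ i, f₁ (of i) = f₂ (of i)) :
    f₁ = f₂ :=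
  QuotientGroup.monoidHom_ext _ (FreeGroup.ext_hom _ _ h)

theorem exists_abelianization_map_eq
    (χ : Abelianization (FreeNilpotentGroup k c) →* Abelianization (FreeNilpotentGroup k c)) :
    ∃ θ : FreeNilpotentGroup k c →* FreeNilpotentGroup k c, Abelianization.map θ = χ := by
  choose g hg using fun i => Abelianization.of_surjective (χ (Abelianization.of (of i)))
  exact ⟨lift lowerCentralSeries_eq_bot g,
    Abelianization.hom_ext _ _ (hom_ext fun i => by simp [hg])⟩

theorem exists_comp_eq_and_abelianization_map_eq {N₂ : Type*} [Group N₂]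
    {π : FreeNilpotentGroup k c →* N₂} (hπ : Function.Surjective π) (φ : N₂ →* N₂)
    (ψ : Abelianization (FreeNilpotentGroup k c) →* Abelianization (FreeNilpotentGroup k c))
    (h : (Abelianization.map π).comp ψ = (Abelianization.map φ).comp (Abelianization.map π)) :
    ∃ θ : FreeNilpotentGroup k c →* FreeNilpotentGroup k c,
      π.comp θ = φ.comp π ∧ Abelianization.map θ = ψ := by
  have compat (i : Fin k) :
      Abelianization.map π (ψ (Abelianization.of (of i))) = Abelianization.of (φ (π (of i))) := by
    simpa using congr($h (Abelianization.of (of i)))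
  choose g hπg hg using fun i => Abelianization.exists_apply_eq_and_of_eq hπ (compat i)
  exact ⟨lift lowerCentralSeries_eq_bot g, hom_ext fun i => by simp [hπg],
    Abelianization.hom_ext _ _ (hom_ext fun i => by simp [hg])⟩

theorem bijective_of_abelianization_map_eq {θ : FreeNilpotentGroup k c →* FreeNilpotentGroup k c}
    {ψ : Abelianization (FreeNilpotentGroup k c) ≃* Abelianization (FreeNilpotentGroup k c)}
    (h : Abelianization.map θ = ψ.toMonoidHom) : Function.Bijective θ := by
  obtain ⟨θ', h'⟩ := exists_abelianization_map_eq ψ.symm.toMonoidHom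
  have hθθ' : Abelianization.map (θ.comp θ') = MonoidHom.id _ := by
    rw [← Abelianization.map_comp, h, h']; ext; simp
  have hθ'θ : Abelianization.map (θ'.comp θ) = MonoidHom.id _ := by
    rw [← Abelianization.map_comp, h, h']; ext; simp
  exact ⟨.of_comp (f := θ') (MonoidHom.injective_of_abelianization_map_eq_id hθ'θ),
    .of_comp (g := θ') (MonoidHom.surjective_of_abelianization_map_eq_id hθθ')⟩

end FreeNilpotentGroup

theorem stmt_19_general (k c : ℕ) (N₂ : Type) [Group N₂]
    (π : FreeNilpotentGroup k c →* N₂) (hπ : Function.Surjective π) (φ : N₂ ≃* N₂) :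
    (∃ φt : FreeNilpotentGroup k c ≃* FreeNilpotentGroup k c,
        π.comp φt.toMonoidHom = φ.toMonoidHom.comp π) ↔
    (∃ ψ : Abelianization (FreeNilpotentGroup k c) ≃* Abelianization (FreeNilpotentGroup k c),
        (Abelianization.map π).comp ψ.toMonoidHom =
          (Abelianization.map φ.toMonoidHom).comp (Abelianization.map π)) := by
  constructor
  · rintro ⟨φt, hφt⟩
    refine ⟨φt.abelianizationCongr, Abelianization.hom_ext _ _ (MonoidHom.ext fun x => ?_)⟩
    simpa using congr(Abelianization.of ($hφt x))
  · rintro ⟨ψ, hψ⟩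
    obtain ⟨θ, hπθ, hθ⟩ :=
      FreeNilpotentGroup.exists_comp_eq_and_abelianization_map_eq hπ φ.toMonoidHom ψ.toMonoidHom hψ
    exact ⟨MulEquiv.ofBijective θ (FreeNilpotentGroup.bijective_of_abelianization_map_eq hθ), hπθ⟩

/-- Let `N₁` be a finitely generated free nilpotent group, `N₂` a finitely
generated nilpotent group, `π : N₁ → N₂` a surjective homomorphism, and `φ` an automorphism of
`N₂`.  Then `φ` lifts to an automorphism `φ̃` of `N₁` (i.e. `π ∘ φ̃ = φ ∘ π`) if and only if the
induced automorphism `φ_*` of the abelianization `N₂^{ab}` lifts to an automorphism of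
`N₁^{ab}` along the induced surjection `N₁^{ab} → N₂^{ab}`. -/
theorem stmt_19 (k c : ℕ) (N₂ : Type) [Group N₂] [Group.FG N₂] [Group.IsNilpotent N₂]
    (π : FreeNilpotentGroup k c →* N₂) (hπ : Function.Surjective π) (φ : N₂ ≃* N₂) :
    (∃ φt : FreeNilpotentGroup k c ≃* FreeNilpotentGroup k c,
        π.comp φt.toMonoidHom = φ.toMonoidHom.comp π) ↔
    (∃ ψ : Abelianization (FreeNilpotentGroup k c) ≃* Abelianization (FreeNilpotentGroup k c),
        (Abelianization.map π).comp ψ.toMonoidHom =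
          (Abelianization.map φ.toMonoidHom).comp (Abelianization.map π)) :=
  stmt_19_general k c N₂ π hπ φ
end
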